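/- arXiv:2412.02235 — 5 statements merged into one kernel-verified Lean document; each statement's English description precedes it below -/
import Mathlib

section
/- For every distribution μ on a finite set Ω and every ρ = 1/r with r ∈ ℕ, there exists a ρ-quantized distribution μ' on Ω such that μ'(x) ∈ {ρ·⌈μ(x)/ρ⌉, ρ·⌊μ(x)/ρ⌋} for every x ∈ Ω. In particular, μ'(x) = μ(x) whenever μ(x) ∈ {0,1}, |μ(x) − μ'(x)| < ρ for all x ∈ Ω, and dTV(μ,μ') < (ρ/2)·|Ω|. -/
open scoped BigOperators

namespace HugeObject

noncomputable section

/-- A finitely supported probability distribution on `Ω`, given by its mass function. -/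
def IsDist {Ω : Type*} (μ : Ω → ℝ) : Prop :=
  (∀ x, 0 ≤ μ x) ∧ (Function.support μ).Finite ∧ ∑ᶠ x, μ x = 1

/-- Total variation distance between two mass functions. -/
def dTV {Ω : Type*} (μ τ : Ω → ℝ) : ℝ :=
  (1 / 2) * ∑ᶠ x, |μ x - τ x|

/-- `T` is a transfer distribution (coupling) between `μ` and `τ`. -/
def IsCoupling {A B : Type*} (T : A × B → ℝ) (μ : A → ℝ) (τ : B → ℝ) : Prop :=
  IsDist T ∧ (∀ a, ∑ᶠ b, T (a, b) = μ a) ∧ (∀ b, ∑ᶠ a, T (a, b) = τ b)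

/-- Earth Mover distance with respect to a distance function `d`: the infimum, over
all transfer distributions between `μ` and `τ`, of the expected distance. -/
def dEM {Ω : Type*} (d : Ω → Ω → ℝ) (μ τ : Ω → ℝ) : ℝ :=
  sInf {c | ∃ T : Ω × Ω → ℝ, IsCoupling T μ τ ∧ c = ∑ᶠ p : Ω × Ω, T p * d p.1 p.2}

/-- η-weighted ℓ1 distance between vectors. -/
def wl1 {A : Type*} (η : A → ℝ) (x y : A → ℝ) : ℝ := ∑ᶠ a, η a * |x a - y a|

/-- A distribution on vectors is supported on `[0,1]^A`. -/
def SuppIn01 {A : Type*} (Λ : (A → ℝ) → ℝ) : Prop :=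
  ∀ t, Λ t ≠ 0 → ∀ a, t a ∈ Set.Icc (0 : ℝ) 1

/-- Empirical distribution of the tuple `t` (distribution of `t I` for uniform `I`). -/
def empDist {n : ℕ} {α : Type*} (t : Fin n → α) : α → ℝ :=
  fun u => (Nat.card {i : Fin n // t i = u} : ℝ) / n

/-- Normalized Hamming distance on `{0,1}^n`. -/
def normHamming (n : ℕ) (x y : Fin n → Bool) : ℝ :=
  (Nat.card {i : Fin n // x i ≠ y i} : ℝ) / n

section Detailing

variable {n : ℕ} {A : Type*} [Fintype A]

/-- Weight distribution (second marginal) of a detailing. -/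
def weight (ξ : (Fin n → Bool) × A → ℝ) (a : A) : ℝ := ∑ x : Fin n → Bool, ξ (x, a)

/-- `ξ` is a detailing of `μ` with respect to `A`: a distribution on
`{0,1}^n × A` whose first marginal is `μ`. -/
def IsDetailing (ξ : (Fin n → Bool) × A → ℝ) (μ : (Fin n → Bool) → ℝ) : Prop :=
  IsDist ξ ∧ ∀ x, ∑ a : A, ξ (x, a) = μ x

/-- Component distribution `μ_a` of a detailing. -/
def component (ξ : (Fin n → Bool) × A → ℝ) (a : A) : (Fin n → Bool) → ℝ :=
  fun x => ξ (x, a) / weight ξ a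

/-- The type of index `i`: `t_i a = Pr_{x ~ μ_a} [x i = 1]` (0 when the weight vanishes). -/
def typeOf (ξ : (Fin n → Bool) × A → ℝ) (i : Fin n) : A → ℝ :=
  fun a => (∑ x : Fin n → Bool, if x i then ξ (x, a) else 0) / weight ξ a

/-- The type distribution of a detailing: distribution of `typeOf ξ I` for uniform `I`. -/
def typeDist (ξ : (Fin n → Bool) × A → ℝ) : (A → ℝ) → ℝ :=
  empDist (fun i : Fin n => typeOf ξ i)

/-- The index of a detailing. -/
def ind (ξ : (Fin n → Bool) × A → ℝ) : ℝ :=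
  (∑ i : Fin n, ∑ a : A, weight ξ a * typeOf ξ i a ^ 2) / n

end Detailing

section Goodness

variable {n q : ℕ}

/-- Marginal of coordinate `j`. -/
def margAt (ν : (Fin n → Bool) → ℝ) (j : Fin n) : Bool → ℝ :=
  fun b => ∑ x : Fin n → Bool, if x j = b then ν x else 0

/-- Joint distribution of the coordinates listed in `J`. -/
def jointAt (ν : (Fin n → Bool) → ℝ) (J : Fin q → Fin n) : (Fin q → Bool) → ℝ :=
  fun y => ∑ x : Fin n → Bool, if ∀ ℓ, x (J ℓ) = y ℓ then ν x else 0

/-- The tuple `J` is ε-independent with respect to `ν`. -/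
def EpsIndep (ε : ℝ) (ν : (Fin n → Bool) → ℝ) (J : Fin q → Fin n) : Prop :=
  dTV (jointAt ν J) (fun y => ∏ ℓ, margAt ν (J ℓ) (y ℓ)) ≤ ε

/-- A distribution on `{0,1}^n` is (ε,q)-good. -/
def IsGoodDist (ε : ℝ) (q : ℕ) (ν : (Fin n → Bool) → ℝ) : Prop :=
  (1 - ε) * (n : ℝ) ^ q ≤ (Nat.card {J : Fin q → Fin n // EpsIndep ε ν J} : ℝ)

/-- A detailing is (ε,q)-good. -/
def IsGoodDetailing {A : Type*} [Fintype A] (ε : ℝ) (q : ℕ)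
    (ξ : (Fin n → Bool) × A → ℝ) : Prop :=
  ∃ J : Finset A, 1 - ε ≤ ∑ a ∈ J, weight ξ a ∧ ∀ a ∈ J, IsGoodDist ε q (component ξ a)

end Goodness

/-- The simulated distribution `D_sim(η, Λ)` on `{0,1}^{s×q}`. -/
def Dsim {A : Type*} [Fintype A] (s q : ℕ) (η : A → ℝ) (Λ : (A → ℝ) → ℝ) :
    (Fin s → Fin q → Bool) → ℝ :=
  fun M => ∑ᶠ T : Fin q → (A → ℝ),
    (∏ j, Λ (T j)) * ∑ a : Fin s → A, (∏ i, η (a i)) *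
      ∏ i : Fin s, ∏ j : Fin q, if M i j then T j (a i) else 1 - T j (a i)

/-- The canonical (s,q) test distribution `D_test` for `μ`. -/
def Dtest (s q n : ℕ) (μ : (Fin n → Bool) → ℝ) : (Fin s → Fin q → Bool) → ℝ :=
  fun M => (∑ J : Fin q → Fin n, ∑ x : Fin s → Fin n → Bool,
    (∏ i, μ (x i)) * (if ∀ i ℓ, x i (J ℓ) = M i ℓ then (1 : ℝ) else 0)) / (n : ℝ) ^ q

/-- Flat refinement of the detailing `ξ` with respect to `η` on `A × B`. -/
def flatRef {n : ℕ} {A B : Type*} [Fintype A] (ξ : (Fin n → Bool) × A → ℝ)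
    (η : A × B → ℝ) : (Fin n → Bool) × (A × B) → ℝ :=
  fun p => η p.2 * component ξ p.2.1 p.1

/-- One-step transition probability of the Change-types construction:
probability of outputting `yi` at a coordinate with source value `xi`,
source type value `h1` and target type value `h2`. -/
def flipStep (h1 h2 : ℝ) (xi yi : Bool) : ℝ :=
  if xi then (if yi then 1 - max 0 ((h1 - h2) / h1) else max 0 ((h1 - h2) / h1))
  else (if yi then max 0 ((h2 - h1) / (1 - h1)) else 1 - max 0 ((h2 - h1) / (1 - h1)))

/-- The output distribution `Ξ` of the Change-types construction. -/
def changeTypes {n : ℕ} {A B : Type*} [Fintype A] (ξ : (Fin n → Bool) × A → ℝ)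
    (η : A × B → ℝ) (H : Fin n → (A × B → ℝ) × (A × B → ℝ)) :
    (Fin n → Bool) × (Fin n → Bool) × (A × B) → ℝ :=
  fun p => η p.2.2 * component ξ p.2.2.1 p.1 *
    ∏ i, flipStep ((H i).1 p.2.2) ((H i).2 p.2.2) (p.1 i) (p.2.1 i)

/-- Pushforward of a mass function along `f`. -/
def push {α β : Type*} (f : α → β) (μ : α → ℝ) : β → ℝ :=
  fun b => ∑ᶠ a ∈ {a | f a = b}, μ a

/-- Rounding to the nearest integer multiple of `ρ`. -/
def roundMul (ρ x : ℝ) : ℝ := ρ * round (x / ρ)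

/-- Adjustment of `η` to `ν`. -/
def adjust {A B : Type*} [Fintype B] (ν : A → ℝ) (η : A × B → ℝ) : A × B → ℝ :=
  fun p => ν p.1 * (η p / ∑ b : B, η (p.1, b))

end
end HugeObject

open HugeObject

/-!
Scale by `r = 1/ρ`: the values `y x = r·μ(x)` are nonnegative reals summing to the integer `r`.
Rounding every value down gives an integer sum `≤ r`, and rounding up each of the values that are
not integers adds one per such value, giving a sum `≥ r`. So rounding up exactly the right number of
non-integer values and down all others gives integers `k x ∈ {⌊y x⌋, ⌈y x⌉}` summing to `r`, and
`μ' = ρ·k` is the required distribution. Each value moves by less than `ρ`, which bounds `dTV`.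
-/

open Finset

section FloorCeilRounding

variable {α ι : Type*} [Ring α] [LinearOrder α] [IsStrictOrderedRing α] [FloorRing α]

theorem Int.ceil_sub_floor_eq_ite (a : α) : ⌈a⌉ - ⌊a⌋ = if ⌊a⌋ < ⌈a⌉ then 1 else 0 := by
  have := Int.ceil_le_floor_add_one a
  have := Int.floor_le_ceil a
  split_ifs <;> omega

theorem sum_ceil_eq_sum_floor_add_card (s : Finset ι) (y : ι → α) :
    ∑ i ∈ s, ⌈y i⌉ = ∑ i ∈ s, ⌊y i⌋ + #{i ∈ s | ⌊y i⌋ < ⌈y i⌉} := by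
  rw [← sub_eq_iff_eq_add', ← sum_sub_distrib, card_filter, Nat.cast_sum]
  exact sum_congr rfl fun i _ => by rw [Int.ceil_sub_floor_eq_ite]; split_ifs <;> rfl

theorem exists_floor_or_ceil_sum_eq_of_le {s : Finset ι} {y : ι → α} {n : ℤ}
    (h_floor : ∑ i ∈ s, ⌊y i⌋ ≤ n) (h_ceil : n ≤ ∑ i ∈ s, ⌈y i⌉) :
    ∃ k : ι → ℤ, (∀ i, k i = ⌊y i⌋ ∨ k i = ⌈y i⌉) ∧ ∑ i ∈ s, k i = n := by
  classical
  rw [sum_ceil_eq_sum_floor_add_card] at h_ceil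
  obtain ⟨T, hTD, hT⟩ := exists_subset_card_eq (s := {i ∈ s | ⌊y i⌋ < ⌈y i⌉})
    (n := (n - ∑ i ∈ s, ⌊y i⌋).toNat) (by omega)
  refine ⟨fun i => if i ∈ T then ⌈y i⌉ else ⌊y i⌋,
    fun i => by by_cases hi : i ∈ T <;> simp [hi], ?_⟩
  have hTs : T ⊆ s := hTD.trans (filter_subset _ _)
  have h_up : ∀ i ∈ T, ⌈y i⌉ = ⌊y i⌋ + 1 := fun i hi => by
    have := Int.ceil_sub_floor_eq_ite (y i)
    rw [if_pos (mem_filter.1 (hTD hi)).2] at this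
    omega
  calc ∑ i ∈ s, (if i ∈ T then ⌈y i⌉ else ⌊y i⌋)
      = ∑ i ∈ s, (⌊y i⌋ + if i ∈ T then 1 else 0) :=
        sum_congr rfl fun i _ => by by_cases hi : i ∈ T <;> simp [hi, h_up]
    _ = ∑ i ∈ s, ⌊y i⌋ + #T := by rw [sum_add_distrib, sum_boole, filter_mem_eq_inter,
          inter_eq_right.2 hTs]
    _ = n := by omega

theorem exists_floor_or_ceil_sum_eq (s : Finset ι) (y : ι → α) {n : ℤ}
    (hy : ∑ i ∈ s, y i = n) :
    ∃ k : ι → ℤ, (∀ i, k i = ⌊y i⌋ ∨ k i = ⌈y i⌉) ∧ ∑ i ∈ s, k i = n := by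
  refine exists_floor_or_ceil_sum_eq_of_le ?_ ?_
  · have : ((∑ i ∈ s, ⌊y i⌋ : ℤ) : α) ≤ n := by
      push_cast
      exact hy ▸ sum_le_sum fun i _ => Int.floor_le (y i)
    exact_mod_cast this
  · have : (n : α) ≤ ((∑ i ∈ s, ⌈y i⌉ : ℤ) : α) := by
      push_cast
      exact hy ▸ sum_le_sum fun i _ => Int.le_ceil (y i)
    exact_mod_cast this

theorem abs_sub_lt_one_of_floor_or_ceil {a : α} {k : ℤ} (hk : k = ⌊a⌋ ∨ k = ⌈a⌉) :
    |a - k| < 1 := by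
  rcases hk with rfl | rfl
  · exact Int.abs_sub_lt_one_of_floor_eq_floor (by simp)
  · rw [abs_sub_lt_iff, sub_lt_iff_lt_add', sub_lt_iff_lt_add']
    exact ⟨(Int.le_ceil a).trans_lt (lt_add_of_pos_right _ one_pos),
      add_comm a 1 ▸ Int.ceil_lt_add_one a⟩

theorem floor_le_of_floor_or_ceil {a : α} {k : ℤ} (hk : k = ⌊a⌋ ∨ k = ⌈a⌉) : ⌊a⌋ ≤ k :=
  hk.elim ge_of_eq fun h => h ▸ Int.floor_le_ceil a

theorem eq_of_floor_or_ceil_of_eq_intCast {a : α} {k m : ℤ} (hk : k = ⌊a⌋ ∨ k = ⌈a⌉)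
    (ha : a = m) : k = m := by
  subst ha
  simpa using hk

theorem abs_sub_mul_lt_of_floor_or_ceil {K : Type*} [Field K] [LinearOrder K]
    [IsStrictOrderedRing K] [FloorRing K] {a ρ : K} (hρ : 0 < ρ) {k : ℤ}
    (hk : k = ⌊a / ρ⌋ ∨ k = ⌈a / ρ⌉) : |a - ρ * k| < ρ := by
  have := mul_lt_mul_of_pos_left (abs_sub_lt_one_of_floor_or_ceil hk) hρ
  rwa [mul_one, ← abs_of_pos hρ, ← abs_mul, abs_of_pos hρ, mul_sub,
    mul_div_cancel₀ _ hρ.ne'] at this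

end FloorCeilRounding

theorem HugeObject.isDist_iff_of_fintype {Ω : Type*} [Fintype Ω] {μ : Ω → ℝ} :
    IsDist μ ↔ (∀ x, 0 ≤ μ x) ∧ ∑ x, μ x = 1 := by
  simp [IsDist, finsum_eq_sum_of_fintype, Set.toFinite]

/-- any distribution on a finite set can be ρ-quantized by rounding
each value up or down to a multiple of ρ, preserving 0/1 values, changing each
value by less than ρ, and changing total variation by less than (ρ/2)·|Ω|. -/
theorem quantization_of_distribution {Ω : Type*} [Fintype Ω]
    (μ : Ω → ℝ) (hμ : IsDist μ) (r : ℕ) (hr : 0 < r) (ρ : ℝ) (hρ : ρ = 1 / r) :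
    ∃ μ' : Ω → ℝ, IsDist μ' ∧
      (∀ x, ∃ k : ℤ, μ' x = k * ρ) ∧
      (∀ x, μ' x = ρ * ⌈μ x / ρ⌉ ∨ μ' x = ρ * ⌊μ x / ρ⌋) ∧
      (∀ x, μ x = 0 ∨ μ x = 1 → μ' x = μ x) ∧
      (∀ x, |μ x - μ' x| < ρ) ∧
      dTV μ μ' < ρ / 2 * Fintype.card Ω := by
  obtain ⟨hμ_nonneg, hμ_sum⟩ := isDist_iff_of_fintype.1 hμ
  have hρ_pos : 0 < ρ := by rw [hρ]; positivity
  have hρr : ρ * r = 1 := by rw [hρ]; field_simp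
  have hy_sum : ∑ x, μ x / ρ = ((r : ℤ) : ℝ) := by
    rw [← sum_div, hμ_sum, Int.cast_natCast, div_eq_iff hρ_pos.ne', mul_comm, hρr]
  obtain ⟨k, hk, hk_sum⟩ := exists_floor_or_ceil_sum_eq univ (fun x => μ x / ρ) hy_sum
  have h_close (x : Ω) : |μ x - ρ * k x| < ρ := abs_sub_mul_lt_of_floor_or_ceil hρ_pos (hk x)
  have hk_nonneg (x : Ω) : 0 ≤ k x :=
    (Int.floor_nonneg.2 (div_nonneg (hμ_nonneg x) hρ_pos.le)).trans
      (floor_le_of_floor_or_ceil (hk x))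
  refine ⟨fun x => ρ * k x, isDist_iff_of_fintype.2 ⟨fun x => ?_, ?_⟩,
    fun x => ⟨k x, mul_comm _ _⟩, fun x => by rcases hk x with h | h <;> simp [h],
    fun x hx => ?_, h_close, ?_⟩
  · exact mul_nonneg hρ_pos.le (mod_cast hk_nonneg x)
  · rw [← mul_sum, ← Int.cast_sum, hk_sum, Int.cast_natCast, hρr]
  · obtain ⟨m, hm⟩ : ∃ m : ℤ, μ x / ρ = m := hx.elim (fun h => ⟨0, by simp [h]⟩)
      fun h => ⟨r, by rw [h, hρ, one_div_one_div, Int.cast_natCast]⟩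
    simp only [eq_of_floor_or_ceil_of_eq_intCast (hk x) hm, ← hm, mul_div_cancel₀ _ hρ_pos.ne']
  · have hΩ : (univ : Finset Ω).Nonempty := nonempty_of_sum_ne_zero (hμ_sum ▸ one_ne_zero)
    have := sum_lt_sum_of_nonempty hΩ fun x _ => h_close x
    rw [dTV, finsum_eq_sum_of_fintype]
    rw [sum_const, card_univ, nsmul_eq_mul] at this
    linarith
end

section
/- Fix ρ = 1/r with r ∈ ℕ, let A be a finite set of size ℓ, let Λ be a finitely supported distribution on [0,1]^A, and let η be any distribution on A. Then there exists a (ρ/(r+1)^ℓ)-quantized distribution Λ' on {0, ρ, 2ρ, …, 1}^A such that d_EM^η(Λ', Λ) < ρ. -/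
open scoped BigOperators

open HugeObject

private lemma minmax1 (a b : ℝ) : min a b + max (a - b) 0 = a := by
  rcases le_total a b with h | h
  · rw [min_eq_left h, max_eq_right (by linarith)]; ring
  · rw [min_eq_right h, max_eq_left (by linarith)]; ring

private lemma minmax2 (a b : ℝ) : min a b + max (b - a) 0 = b := by
  rcases le_total a b with h | h
  · rw [min_eq_left h, max_eq_left (by linarith)]; ring
  · rw [min_eq_right h, max_eq_right (by linarith)]; ring

private lemma maxsub (a b : ℝ) : max (a - b) 0 - max (b - a) 0 = a - b := by
  rcases le_total a b with h | h
  · rw [max_eq_right (by linarith : a - b ≤ 0), max_eq_left (by linarith : (0:ℝ) ≤ b - a)]; ring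
  · rw [max_eq_left (by linarith : (0:ℝ) ≤ a - b), max_eq_right (by linarith : b - a ≤ 0)]; ring

private lemma maxadd (a b : ℝ) : max (a - b) 0 + max (b - a) 0 = |a - b| := by
  rcases le_total a b with h | h
  · rw [max_eq_right (by linarith : a - b ≤ 0), max_eq_left (by linarith : (0:ℝ) ≤ b - a),
      abs_of_nonpos (by linarith : a - b ≤ 0)]; ring
  · rw [max_eq_left (by linarith : (0:ℝ) ≤ a - b), max_eq_right (by linarith : b - a ≤ 0),
      abs_of_nonneg (by linarith : (0:ℝ) ≤ a - b)]; ring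

private lemma wl1_eq {A : Type*} [Fintype A] (η x y : A → ℝ) :
    wl1 η x y = ∑ a, η a * |x a - y a| := finsum_eq_sum_of_fintype _

private lemma wl1_nonneg {A : Type*} [Fintype A] {η : A → ℝ} (hη : ∀ a, 0 ≤ η a)
    (x y : A → ℝ) : 0 ≤ wl1 η x y := by
  rw [wl1_eq]
  exact Finset.sum_nonneg fun a _ => mul_nonneg (hη a) (abs_nonneg _)

private lemma wl1_self {A : Type*} [Fintype A] (η x : A → ℝ) : wl1 η x x = 0 := by
  rw [wl1_eq]; simp

private lemma wl1_triangle {A : Type*} [Fintype A] {η : A → ℝ} (hη : ∀ a, 0 ≤ η a)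
    (x y z : A → ℝ) : wl1 η x z ≤ wl1 η x y + wl1 η y z := by
  rw [wl1_eq, wl1_eq, wl1_eq, ← Finset.sum_add_distrib]
  refine Finset.sum_le_sum fun a _ => ?_
  rw [← mul_add]
  refine mul_le_mul_of_nonneg_left ?_ (hη a)
  exact (abs_sub_le _ _ _).trans (le_refl _)

/-- every finitely supported distribution on [0,1]^A is ρ-close in
η-weighted EMD to a (ρ/(r+1)^ℓ)-quantized distribution on the grid {0,ρ,…,1}^A. -/
theorem quantize_type_distribution {A : Type*} [Fintype A] (r : ℕ) (hr : 0 < r)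
    (ρ : ℝ) (hρ : ρ = 1 / r)
    (Λ : (A → ℝ) → ℝ) (hΛ : IsDist Λ) (hΛ01 : SuppIn01 Λ)
    (η : A → ℝ) (hη : IsDist η) :
    ∃ Λ' : (A → ℝ) → ℝ, IsDist Λ' ∧
      (∀ t, ∃ k : ℕ, Λ' t = k * (ρ / (r + 1) ^ (Fintype.card A))) ∧
      (∀ t, Λ' t ≠ 0 → ∀ a, ∃ k : ℕ, k ≤ r ∧ t a = k * ρ) ∧
      dEM (wl1 η) Λ' Λ < ρ := by
  classical
  obtain ⟨hΛ0, hΛfin, hΛ1⟩ := hΛ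
  have hη0 : ∀ a, 0 ≤ η a := hη.1
  have hη1 : ∑ a : A, η a = 1 := by
    have h := hη.2.2; rwa [finsum_eq_sum_of_fintype] at h
  have hr' : (0:ℝ) < r := by exact_mod_cast hr
  have hρ0 : 0 < ρ := by rw [hρ]; positivity
  set ℓ := Fintype.card A with hℓ
  set N : ℕ := (r+1)^ℓ with hN
  have hN0 : (0:ℝ) < N := by rw [hN]; positivity
  set δ : ℝ := ρ / (r + 1) ^ ℓ with hδ
  have hδN : δ = ρ / N := by rw [hδ, hN]; push_cast; ring
  have hδ0 : 0 < δ := by rw [hδN]; positivity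
  have h1δ : (r:ℝ) * (N:ℝ) * δ = 1 := by
    rw [hδN, hρ]; field_simp
  have hNδρ : (N:ℝ) * δ = ρ := by rw [hδN]; field_simp
  set S : Finset (A → ℝ) := hΛfin.toFinset with hSdef
  have hS : ∀ t, t ∈ S ↔ Λ t ≠ 0 := fun t => hΛfin.mem_toFinset
  have hΛS : ∑ t ∈ S, Λ t = 1 := by
    rw [← hΛ1]
    exact (finsum_eq_finset_sum_of_support_subset _
      (fun t ht => Finset.mem_coe.2 ((hS t).2 ht))).symm
  set f : (A → ℝ) → (A → ℝ) := fun t a => ρ * round (t a / ρ) with hfdef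
  have hround : ∀ t ∈ S, ∀ a, ∃ k : ℕ, k ≤ r ∧ f t a = k * ρ := by
    intro t ht a
    have ht01 := Set.mem_Icc.1 (hΛ01 t ((hS t).1 ht) a)
    have hy1 : t a / ρ ≤ r := by
      rw [div_le_iff₀ hρ0, hρ]
      calc t a ≤ 1 := ht01.2
        _ = (r:ℝ) * (1/r) := by field_simp
    have hy0 : (0:ℝ) ≤ t a / ρ := div_nonneg ht01.1 hρ0.le
    set z : ℤ := round (t a / ρ) with hz
    have habs := abs_sub_round (t a / ρ)
    rw [abs_le] at habs
    have hz0 : 0 ≤ z := by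
      by_contra h
      push_neg at h
      have h1 : z ≤ -1 := by omega
      have h2 : (z:ℝ) ≤ -1 := by exact_mod_cast h1
      linarith [habs.1]
    have hzr : z ≤ r := by
      by_contra h
      push_neg at h
      have h1 : (r:ℤ) + 1 ≤ z := by omega
      have h2 : (r:ℝ) + 1 ≤ (z:ℝ) := by exact_mod_cast h1
      linarith [habs.2]
    refine ⟨z.toNat, by omega, ?_⟩
    have hcast : ((z.toNat : ℕ) : ℝ) = (z : ℝ) := by exact_mod_cast Int.toNat_of_nonneg hz0
    show ρ * (round (t a / ρ) : ℝ) = _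
    rw [← hz, hcast]; ring
  have hf01 : ∀ t ∈ S, ∀ a, 0 ≤ f t a ∧ f t a ≤ 1 := by
    intro t ht a
    obtain ⟨k, hk, he⟩ := hround t ht a
    refine ⟨by rw [he]; positivity, ?_⟩
    rw [he, hρ]
    have hkr : (k:ℝ) ≤ r := by exact_mod_cast hk
    calc (k:ℝ) * (1/r) ≤ (r:ℝ) * (1/r) :=
          mul_le_mul_of_nonneg_right hkr (by positivity)
      _ = 1 := by field_simp
  set G : Finset (A → ℝ) := S.image f with hGdef
  have hwle1 : ∀ w ∈ G, ∀ w' ∈ G, wl1 η w w' ≤ 1 := by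
    intro w hw w' hw'
    obtain ⟨t, ht, rfl⟩ := Finset.mem_image.1 hw
    obtain ⟨t', ht', rfl⟩ := Finset.mem_image.1 hw'
    rw [wl1_eq]
    calc ∑ a, η a * |f t a - f t' a| ≤ ∑ a, η a := by
          refine Finset.sum_le_sum fun a _ => ?_
          have h1 := hf01 t ht a; have h2 := hf01 t' ht' a
          have hab : |f t a - f t' a| ≤ 1 := by
            rw [abs_le]; constructor <;> linarith [h1.1, h1.2, h2.1, h2.2]
          calc η a * |f t a - f t' a| ≤ η a * 1 := mul_le_mul_of_nonneg_left hab (hη0 a)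
            _ = η a := mul_one _
      _ = 1 := hη1
  have happrox : ∀ t ∈ S, wl1 η (f t) t ≤ ρ / 2 := by
    intro t ht
    rw [wl1_eq]
    have hb : ∀ a, η a * |f t a - t a| ≤ η a * (ρ/2) := by
      intro a
      refine mul_le_mul_of_nonneg_left ?_ (hη0 a)
      have h := abs_sub_round (t a / ρ)
      have he : f t a - t a = ρ * ((round (t a / ρ) : ℝ) - t a / ρ) := by
        show ρ * (round (t a / ρ) : ℝ) - t a = _
        field_simp
      rw [he, abs_mul, abs_of_pos hρ0, abs_sub_comm]
      calc ρ * |t a / ρ - (round (t a / ρ) : ℝ)| ≤ ρ * (1/2) :=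
            mul_le_mul_of_nonneg_left h hρ0.le
        _ = ρ/2 := by ring
    calc ∑ a, η a * |f t a - t a| ≤ ∑ a, η a * (ρ/2) := Finset.sum_le_sum fun a _ => hb a
      _ = ρ/2 := by rw [← Finset.sum_mul, hη1, one_mul]
  have hSne : S.Nonempty := by
    rw [Finset.nonempty_iff_ne_empty]
    intro h; rw [h] at hΛS; simp at hΛS
  have hGne : G.Nonempty := hSne.image f
  have hGcard : (G.card : ℝ) ≤ (N:ℝ) := by
    have h1 : G ⊆ Finset.image
        (fun v : A → Fin (r+1) => fun a => ((v a : ℕ) : ℝ) * ρ) Finset.univ := by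
      intro w hw
      obtain ⟨t, ht, rfl⟩ := Finset.mem_image.1 hw
      refine Finset.mem_image.2 ⟨fun a => ⟨(hround t ht a).choose, by
        have := (hround t ht a).choose_spec.1; omega⟩, Finset.mem_univ _, ?_⟩
      funext a
      exact ((hround t ht a).choose_spec.2).symm
    have h2 : G.card ≤ N := by
      calc G.card ≤ _ := Finset.card_le_card h1
        _ ≤ Fintype.card (A → Fin (r+1)) := by
            refine Finset.card_image_le.trans ?_
            simp
        _ = N := by rw [Fintype.card_fun, hN, hℓ]; simp
    exact_mod_cast h2
  set P : (A → ℝ) → ℝ := fun w => ∑ t ∈ S.filter (fun t => f t = w), Λ t with hPdef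
  have hP0 : ∀ w, 0 ≤ P w := fun w => Finset.sum_nonneg fun t _ => hΛ0 t
  have hPpos : ∀ w ∈ G, 0 < P w := by
    intro w hw
    obtain ⟨t, ht, rfl⟩ := Finset.mem_image.1 hw
    refine Finset.sum_pos' (fun u _ => hΛ0 u) ⟨t, Finset.mem_filter.2 ⟨ht, rfl⟩, ?_⟩
    exact lt_of_le_of_ne (hΛ0 t) (Ne.symm ((hS t).1 ht))
  have hPsum : ∑ w ∈ G, P w = 1 := by
    rw [hPdef]
    rw [Finset.sum_fiberwise_of_maps_to (fun t ht => Finset.mem_image_of_mem f ht) Λ]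
    exact hΛS
  have hfibersum : ∀ g : (A → ℝ) → ℝ,
      ∑ t ∈ S, g (f t) * Λ t = ∑ w ∈ G, g w * P w := by
    intro g
    have h1 : ∑ w ∈ G, ∑ t ∈ S.filter (fun t => f t = w), (g (f t) * Λ t)
        = ∑ t ∈ S, g (f t) * Λ t :=
      Finset.sum_fiberwise_of_maps_to (fun t ht => Finset.mem_image_of_mem f ht) _
    rw [← h1]
    refine Finset.sum_congr rfl fun w hw => ?_
    rw [hPdef, Finset.mul_sum]
    refine Finset.sum_congr rfl fun t ht => ?_
    rw [(Finset.mem_filter.1 ht).2]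
  set kk : (A → ℝ) → ℕ := fun w => ⌊P w / δ⌋₊ with hkk
  have hk_le : ∀ w, (kk w : ℝ) * δ ≤ P w := by
    intro w
    have h := Nat.floor_le (div_nonneg (hP0 w) hδ0.le)
    calc (kk w : ℝ) * δ ≤ (P w / δ) * δ := mul_le_mul_of_nonneg_right h hδ0.le
      _ = P w := by field_simp
  have hk_lt : ∀ w, P w < (kk w : ℝ) * δ + δ := by
    intro w
    have h := Nat.lt_floor_add_one (P w / δ)
    have h2 := mul_lt_mul_of_pos_right h hδ0
    calc P w = (P w / δ) * δ := by field_simp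
      _ < ((kk w : ℝ) + 1) * δ := h2
      _ = (kk w:ℝ) * δ + δ := by ring
  have hksum_le : ∑ w ∈ G, kk w ≤ r * N := by
    by_contra hcon
    push_neg at hcon
    have h1 : (r:ℝ) * (N:ℝ) < ((∑ w ∈ G, kk w : ℕ) : ℝ) := by exact_mod_cast hcon
    have h2 : ((∑ w ∈ G, kk w : ℕ):ℝ) * δ ≤ 1 := by
      push_cast
      calc (∑ w ∈ G, (kk w : ℝ)) * δ = ∑ w ∈ G, (kk w : ℝ) * δ := by
            rw [Finset.sum_mul]
        _ ≤ ∑ w ∈ G, P w := Finset.sum_le_sum fun w _ => hk_le w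
        _ = 1 := hPsum
    nlinarith [hδ0, h1δ]
  set m : ℕ := r * N - ∑ w ∈ G, kk w with hm
  have hmδ : (m : ℝ) * δ = ∑ w ∈ G, (P w - (kk w:ℝ) * δ) := by
    have h0 : ((m + ∑ w ∈ G, kk w : ℕ) : ℝ) = (r:ℝ) * (N:ℝ) := by
      rw [hm, Nat.sub_add_cancel hksum_le]; push_cast; ring
    push_cast at h0
    rw [Finset.sum_sub_distrib, hPsum]
    have h2 : ∑ w ∈ G, ((kk w:ℝ) * δ) = (∑ w ∈ G, (kk w:ℝ)) * δ := by
      rw [Finset.sum_mul]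
    rw [h2]
    linear_combination δ * h0 + h1δ
  have hfr0 : ∀ w, 0 ≤ P w - (kk w:ℝ) * δ := fun w => by linarith [hk_le w]
  have hfrδ : ∀ w, P w - (kk w:ℝ) * δ < δ := fun w => by linarith [hk_lt w]
  set F : Finset (A → ℝ) := G.filter (fun w => (kk w:ℝ) * δ < P w) with hF
  have hmF : m ≤ F.card := by
    rcases Nat.eq_zero_or_pos m with h | h
    · simp [h]
    · have hmpos : 0 < (m:ℝ) * δ := mul_pos (by exact_mod_cast h) hδ0
      have hsum : ∑ w ∈ F.filter (fun _ => True), 0 = 0 := by simp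
      have hsum2 : ∑ w ∈ F, (P w - (kk w:ℝ)*δ) = ∑ w ∈ G, (P w - (kk w:ℝ)*δ) := by
        rw [hF]
        refine Finset.sum_filter_of_ne fun w hw hne => ?_
        rcases lt_or_eq_of_le (hk_le w) with h' | h'
        · exact h'
        · exact absurd (by linarith) hne
      have hFne : F.Nonempty := by
        rw [Finset.nonempty_iff_ne_empty]
        intro he
        have h0 : (0:ℝ) = (m:ℝ)*δ := by
          rw [hmδ, ← hsum2, he, Finset.sum_empty]
        linarith
      have hlt : ∑ w ∈ F, (P w - (kk w:ℝ)*δ) < ∑ w ∈ F, δ :=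
        Finset.sum_lt_sum_of_nonempty hFne fun w _ => hfrδ w
      rw [Finset.sum_const, nsmul_eq_mul] at hlt
      have h5 : (m:ℝ) * δ < (F.card:ℝ) * δ := by rw [hmδ, ← hsum2]; exact hlt
      have h6 : (m:ℝ) < (F.card:ℝ) := lt_of_mul_lt_mul_right h5 hδ0.le
      exact_mod_cast h6.le
  obtain ⟨C, hCF, hCcard⟩ := Finset.exists_subset_card_eq hmF
  have hCG : C ⊆ G := hCF.trans (Finset.filter_subset _ _)
  set Q : (A → ℝ) → ℝ := fun w =>
    if w ∈ G then ((kk w + if w ∈ C then 1 else 0 : ℕ) : ℝ) * δ else 0 with hQ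
  have hQ0 : ∀ w, 0 ≤ Q w := by
    intro w; simp only [hQ]; split
    · positivity
    · exact le_refl 0
  have hQout : ∀ w ∉ G, Q w = 0 := by
    intro w hw; simp only [hQ]; rw [if_neg hw]
  have hQsum : ∑ w ∈ G, Q w = 1 := by
    have h1 : ∀ w ∈ G, Q w = (kk w:ℝ)*δ + (if w ∈ C then δ else 0) := by
      intro w hw; simp only [hQ]; rw [if_pos hw]
      split_ifs <;> push_cast <;> ring
    rw [Finset.sum_congr rfl h1, Finset.sum_add_distrib]
    rw [Finset.sum_ite_mem, Finset.inter_eq_right.2 hCG, Finset.sum_const, hCcard,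
      nsmul_eq_mul]
    have h2 : (m:ℝ)*δ = 1 - ∑ w ∈ G, (kk w:ℝ)*δ := by
      rw [hmδ, Finset.sum_sub_distrib, hPsum]
    linarith
  have herr : ∀ w ∈ G, |Q w - P w| < δ := by
    intro w hw
    simp only [hQ]; rw [if_pos hw]
    by_cases hc : w ∈ C
    · have hfrpos : (kk w:ℝ)*δ < P w := by
        have := Finset.mem_filter.1 (hCF hc)
        exact this.2
      rw [if_pos hc]; push_cast
      have hx : ((kk w:ℝ) + 1) * δ = (kk w:ℝ) * δ + δ := by ring
      rw [abs_lt]; constructor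
      · rw [hx]; linarith [hk_lt w]
      · rw [hx]; linarith
    · rw [if_neg hc]; push_cast
      have hx : ((kk w:ℝ) + 0) * δ = (kk w:ℝ) * δ := by ring
      rw [abs_lt, hx]; constructor
      · linarith [hfrδ w]
      · linarith [hk_le w]
  set ee : (A → ℝ) → ℝ := fun w => max (Q w - P w) 0 with hee
  set dd : (A → ℝ) → ℝ := fun w => max (P w - Q w) 0 with hdd
  set D : ℝ := ∑ w ∈ G, ee w with hD
  have hee0 : ∀ w, 0 ≤ ee w := fun w => le_max_right _ _
  have hdd0 : ∀ w, 0 ≤ dd w := fun w => le_max_right _ _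
  have hD0 : 0 ≤ D := Finset.sum_nonneg fun w _ => hee0 w
  have hDd : ∑ w ∈ G, dd w = D := by
    have h1 : ∑ w ∈ G, (ee w - dd w) = 0 := by
      have h2 : ∀ w ∈ G, ee w - dd w = Q w - P w := fun w _ => maxsub _ _
      rw [Finset.sum_congr rfl h2, Finset.sum_sub_distrib, hQsum, hPsum, sub_self]
    rw [Finset.sum_sub_distrib] at h1
    rw [hD]; linarith
  have hDlt : D < ρ / 2 := by
    have h1 : ∑ w ∈ G, (ee w + dd w) < ∑ w ∈ G, δ := by
      refine Finset.sum_lt_sum_of_nonempty hGne fun w hw => ?_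
      calc ee w + dd w = |Q w - P w| := maxadd _ _
        _ < δ := herr w hw
    rw [Finset.sum_add_distrib, hDd, Finset.sum_const, nsmul_eq_mul] at h1
    have h2 : (G.card:ℝ) * δ ≤ (N:ℝ) * δ := mul_le_mul_of_nonneg_right hGcard hδ0.le
    rw [hNδρ] at h2
    rw [hD] at h1 ⊢
    linarith
  have hDzero : D = 0 → ∀ w ∈ G, Q w = P w := by
    intro h w hw
    have h1 : ee w = 0 := by
      have := (Finset.sum_eq_zero_iff_of_nonneg (fun u _ => hee0 u)).1 (hD ▸ h) w hw
      exact this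
    have h2 : dd w = 0 := by
      have hs : ∑ u ∈ G, dd u = 0 := by rw [hDd]; exact h
      exact (Finset.sum_eq_zero_iff_of_nonneg (fun u _ => hdd0 u)).1 hs w hw
    have h3 : Q w - P w ≤ 0 := by
      have : Q w - P w ≤ ee w := le_max_left _ _
      linarith
    have h4 : P w - Q w ≤ 0 := by
      have : P w - Q w ≤ dd w := le_max_left _ _
      linarith
    linarith
  set T0 : (A → ℝ) → (A → ℝ) → ℝ := fun w w' =>
    (if w = w' then min (Q w) (P w) else 0) + (if D = 0 then 0 else ee w * dd w' / D)
    with hT0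
  have hT0nn : ∀ w w', 0 ≤ T0 w w' := by
    intro w w'; simp only [hT0]
    have h1 : 0 ≤ min (Q w) (P w) := le_min (hQ0 w) (hP0 w)
    have h2 : 0 ≤ ee w * dd w' / D := div_nonneg (mul_nonneg (hee0 w) (hdd0 w')) hD0
    refine add_nonneg ?_ ?_ <;> split_ifs <;> first | exact h1 | exact h2 | exact le_refl 0
  have hT0zero : ∀ w, w ∉ G → ∀ w', T0 w w' = 0 := by
    intro w hw w'
    have h1 : Q w = 0 := hQout w hw
    have h2 : P w = 0 := by
      have hemp : S.filter (fun t => f t = w) = ∅ := by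
        rw [Finset.filter_eq_empty_iff]
        intro t ht hft
        exact hw (hft ▸ Finset.mem_image_of_mem f ht)
      simp only [hPdef]
      rw [hemp, Finset.sum_empty]
    have h3 : ee w = 0 := by simp [hee, h1, h2]
    simp only [hT0]
    split_ifs <;> simp [h1, h2, h3]
  have hT0row : ∀ w, ∑ w' ∈ G, T0 w w' = Q w := by
    intro w
    by_cases hw : w ∈ G
    · simp only [hT0]
      rw [Finset.sum_add_distrib]
      have h1 : ∑ w' ∈ G, (if w = w' then min (Q w) (P w) else 0) = min (Q w) (P w) := by
        rw [Finset.sum_ite_eq G w (fun _ => min (Q w) (P w)), if_pos hw]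
      rw [h1]
      by_cases hDe : D = 0
      · have hQP := hDzero hDe w hw
        simp [hDe, hQP]
      · have h2 : ∑ w' ∈ G, (if D = 0 then 0 else ee w * dd w' / D) = ee w := by
          simp only [if_neg hDe]
          rw [← Finset.sum_div, ← Finset.mul_sum, hDd, mul_div_assoc, div_self hDe,
            mul_one]
        rw [h2]
        have h3 := minmax1 (Q w) (P w)
        simp only [hee]
        linarith [h3]
    · rw [Finset.sum_eq_zero (fun w' _ => hT0zero w hw w'), hQout w hw]
  have hT0col : ∀ w' ∈ G, ∑ w ∈ G, T0 w w' = P w' := by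
    intro w' hw'
    simp only [hT0]
    rw [Finset.sum_add_distrib]
    have h1 : ∑ w ∈ G, (if w = w' then min (Q w) (P w) else 0) = min (Q w') (P w') := by
      rw [Finset.sum_ite_eq' G w' (fun w => min (Q w) (P w)), if_pos hw']
    rw [h1]
    by_cases hDe : D = 0
    · have hQP := hDzero hDe w' hw'
      simp [hDe, hQP]
    · have h2 : ∑ w ∈ G, (if D = 0 then 0 else ee w * dd w' / D) = dd w' := by
        simp only [if_neg hDe]
        rw [← Finset.sum_div, ← Finset.sum_mul, hD]
        rw [mul_comm, mul_div_assoc, div_self hDe, mul_one]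
      rw [h2]
      have h3 := minmax2 (Q w') (P w')
      simp only [hdd]
      linarith [h3]
  set T : ((A → ℝ) × (A → ℝ)) → ℝ := fun p =>
    if p.2 ∈ S then T0 p.1 (f p.2) * (Λ p.2 / P (f p.2)) else 0 with hT
  have hTnn : ∀ p, 0 ≤ T p := by
    intro p; simp only [hT]; split_ifs with h
    · exact mul_nonneg (hT0nn _ _) (div_nonneg (hΛ0 _) (hP0 _))
    · exact le_refl 0
  have hTsupp : ∀ p, T p ≠ 0 → p.1 ∈ G ∧ p.2 ∈ S := by
    intro p hp
    simp only [hT] at hp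
    by_cases h : p.2 ∈ S
    · refine ⟨?_, h⟩
      by_contra hg
      rw [if_pos h, hT0zero _ hg, zero_mul] at hp
      exact hp rfl
    · rw [if_neg h] at hp
      exact absurd rfl hp
  have hTrow : ∀ w, ∑ t ∈ S, T (w, t) = Q w := by
    intro w
    have h1 : ∀ t ∈ S, T (w, t) = (fun w' => T0 w w' / P w') (f t) * Λ t := by
      intro t ht; simp only [hT]; rw [if_pos ht]; ring
    calc ∑ t ∈ S, T (w, t) = ∑ t ∈ S, (fun w' => T0 w w' / P w') (f t) * Λ t :=
          Finset.sum_congr rfl h1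
      _ = ∑ w' ∈ G, (fun w' => T0 w w' / P w') w' * P w' := hfibersum (fun w' => T0 w w' / P w')
      _ = ∑ w' ∈ G, T0 w w' := by
          refine Finset.sum_congr rfl fun w' hw' => ?_
          simp only
          rw [div_mul_cancel₀ _ (ne_of_gt (hPpos w' hw'))]
      _ = Q w := hT0row w
  have hTcol : ∀ t ∈ S, ∑ w ∈ G, T (w, t) = Λ t := by
    intro t ht
    have h1 : ∀ w ∈ G, T (w, t) = T0 w (f t) * (Λ t / P (f t)) := by
      intro w _; simp only [hT]; rw [if_pos ht]
    rw [Finset.sum_congr rfl h1, ← Finset.sum_mul,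
      hT0col (f t) (Finset.mem_image_of_mem f ht)]
    rw [mul_comm, div_mul_cancel₀ _ (ne_of_gt (hPpos _ (Finset.mem_image_of_mem f ht)))]
  have hTfin : Function.support T ⊆ ((G ×ˢ S : Finset _) : Set _) := by
    intro p hp
    have h := hTsupp p hp
    exact Finset.mem_coe.2 (Finset.mem_product.2 h)
  have hTsum : ∑ᶠ p, T p = 1 := by
    rw [finsum_eq_finset_sum_of_support_subset T hTfin, Finset.sum_product]
    rw [Finset.sum_congr rfl (fun w _ => hTrow w), hQsum]
  have hdistT : IsDist T := ⟨hTnn, Set.Finite.subset (G ×ˢ S).finite_toSet hTfin, hTsum⟩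
  have hmarg1 : ∀ w, ∑ᶠ t, T (w, t) = Q w := by
    intro w
    have hsub : Function.support (fun t => T (w, t)) ⊆ (S : Set (A → ℝ)) := by
      intro t ht
      exact Finset.mem_coe.2 (hTsupp (w, t) ht).2
    rw [finsum_eq_finset_sum_of_support_subset _ hsub, hTrow w]
  have hmarg2 : ∀ t, ∑ᶠ w, T (w, t) = Λ t := by
    intro t
    by_cases ht : t ∈ S
    · have hsub : Function.support (fun w => T (w, t)) ⊆ (G : Set (A → ℝ)) := by
        intro w hw
        exact Finset.mem_coe.2 (hTsupp (w, t) hw).1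
      rw [finsum_eq_finset_sum_of_support_subset _ hsub, hTcol t ht]
    · have hz : ∀ w, T (w, t) = 0 := by
        intro w; simp only [hT]; rw [if_neg ht]
      rw [finsum_eq_zero_of_forall_eq_zero hz]
      have : Λ t = 0 := by
        by_contra h; exact ht ((hS t).2 h)
      exact this.symm
  set c : ℝ := ∑ᶠ p : ((A → ℝ) × (A → ℝ)), T p * wl1 η p.1 p.2 with hc
  have hcsum : c = ∑ w ∈ G, ∑ t ∈ S, T (w, t) * wl1 η w t := by
    have hsub : Function.support (fun p : (A → ℝ) × (A → ℝ) => T p * wl1 η p.1 p.2)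
        ⊆ ((G ×ˢ S : Finset _) : Set _) := by
      intro p hp
      have hTp : T p ≠ 0 := by
        intro h
        apply hp
        show T p * wl1 η p.1 p.2 = 0
        rw [h, zero_mul]
      exact Finset.mem_coe.2 (Finset.mem_product.2 (hTsupp p hTp))
    rw [hc, finsum_eq_finset_sum_of_support_subset _ hsub, Finset.sum_product]
  have hpartB : ∑ w ∈ G, ∑ t ∈ S, T (w, t) * wl1 η (f t) t ≤ ρ / 2 := by
    rw [Finset.sum_comm]
    have h1 : ∀ t ∈ S, ∑ w ∈ G, T (w, t) * wl1 η (f t) t = Λ t * wl1 η (f t) t := by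
      intro t ht; rw [← Finset.sum_mul, hTcol t ht]
    rw [Finset.sum_congr rfl h1]
    calc ∑ t ∈ S, Λ t * wl1 η (f t) t ≤ ∑ t ∈ S, Λ t * (ρ/2) := by
          refine Finset.sum_le_sum fun t ht => ?_
          exact mul_le_mul_of_nonneg_left (happrox t ht) (hΛ0 t)
      _ = ρ/2 := by rw [← Finset.sum_mul, hΛS, one_mul]
  have hpartA : ∑ w ∈ G, ∑ t ∈ S, T (w, t) * wl1 η w (f t) ≤ D := by
    have h1 : ∀ w ∈ G, ∑ t ∈ S, T (w, t) * wl1 η w (f t)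
        = ∑ w' ∈ G, T0 w w' * wl1 η w w' := by
      intro w hw
      have h2 : ∀ t ∈ S, T (w, t) * wl1 η w (f t)
          = (fun w' => T0 w w' * wl1 η w w' / P w') (f t) * Λ t := by
        intro t ht; simp only [hT]; rw [if_pos ht]; ring
      calc ∑ t ∈ S, T (w, t) * wl1 η w (f t)
          = ∑ t ∈ S, (fun w' => T0 w w' * wl1 η w w' / P w') (f t) * Λ t :=
            Finset.sum_congr rfl h2
        _ = ∑ w' ∈ G, (fun w' => T0 w w' * wl1 η w w' / P w') w' * P w' :=
            hfibersum (fun w' => T0 w w' * wl1 η w w' / P w')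
        _ = ∑ w' ∈ G, T0 w w' * wl1 η w w' := by
            refine Finset.sum_congr rfl fun w' hw' => ?_
            simp only
            rw [div_mul_cancel₀ _ (ne_of_gt (hPpos w' hw'))]
    rw [Finset.sum_congr rfl h1]
    have h3 : ∀ w ∈ G, ∀ w' ∈ G,
        T0 w w' * wl1 η w w' ≤ (if D = 0 then 0 else ee w * dd w' / D) := by
      intro w hw w' hw'
      have hoff : 0 ≤ (if D = 0 then 0 else ee w * dd w' / D) := by
        split_ifs
        · exact le_refl 0
        · exact div_nonneg (mul_nonneg (hee0 w) (hdd0 w')) hD0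
      by_cases he : w = w'
      · subst he
        rw [wl1_self, mul_zero]
        exact hoff
      · simp only [hT0]
        rw [if_neg he, zero_add]
        calc (if D = 0 then 0 else ee w * dd w' / D) * wl1 η w w'
            ≤ (if D = 0 then 0 else ee w * dd w' / D) * 1 :=
              mul_le_mul_of_nonneg_left (hwle1 w hw w' hw') hoff
          _ = _ := mul_one _
    calc ∑ w ∈ G, ∑ w' ∈ G, T0 w w' * wl1 η w w'
        ≤ ∑ w ∈ G, ∑ w' ∈ G, (if D = 0 then 0 else ee w * dd w' / D) :=
          Finset.sum_le_sum fun w hw => Finset.sum_le_sum fun w' hw' => h3 w hw w' hw'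
      _ ≤ D := by
          by_cases hDe : D = 0
          · simp only [if_pos hDe, Finset.sum_const_zero]
            exact hD0
          · simp only [if_neg hDe]
            have h4 : ∑ w ∈ G, ∑ w' ∈ G, ee w * dd w' / D = D := by
              have h5 : ∀ w ∈ G, ∑ w' ∈ G, ee w * dd w' / D = ee w := by
                intro w _
                rw [← Finset.sum_div, ← Finset.mul_sum, hDd, mul_div_assoc,
                  div_self hDe, mul_one]
              rw [Finset.sum_congr rfl h5]
            exact le_of_eq h4
  have hcost : c ≤ D + ρ/2 := by
    rw [hcsum]
    calc ∑ w ∈ G, ∑ t ∈ S, T (w,t) * wl1 η w t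
        ≤ ∑ w ∈ G, ∑ t ∈ S, (T (w,t) * wl1 η w (f t) + T (w,t) * wl1 η (f t) t) := by
          refine Finset.sum_le_sum fun w _ => Finset.sum_le_sum fun t _ => ?_
          rw [← mul_add]
          exact mul_le_mul_of_nonneg_left (wl1_triangle hη0 w (f t) t) (hTnn (w,t))
      _ = (∑ w ∈ G, ∑ t ∈ S, T (w,t) * wl1 η w (f t))
            + ∑ w ∈ G, ∑ t ∈ S, T (w,t) * wl1 η (f t) t := by
          rw [← Finset.sum_add_distrib]
          exact Finset.sum_congr rfl fun w _ => Finset.sum_add_distrib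
      _ ≤ D + ρ/2 := add_le_add hpartA hpartB
  refine ⟨Q, ⟨hQ0, ?_, ?_⟩, ?_, ?_, ?_⟩
  · refine Set.Finite.subset G.finite_toSet fun w hw => ?_
    by_contra hg
    exact hw (hQout w (by simpa using hg))
  · have hsub : Function.support Q ⊆ (G : Set (A → ℝ)) := by
      intro w hw
      by_contra hg
      exact hw (hQout w (by simpa using hg))
    rw [finsum_eq_finset_sum_of_support_subset Q hsub]
    exact hQsum
  · intro t
    simp only [hQ]
    split_ifs with h h'
    · exact ⟨kk t + 1, by push_cast; ring⟩
    · exact ⟨kk t, by push_cast; ring⟩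
    · exact ⟨0, by simp⟩
  · intro t hQt a
    have htG : t ∈ G := by
      by_contra hg; exact hQt (hQout t hg)
    obtain ⟨t', ht', rfl⟩ := Finset.mem_image.1 htG
    exact hround t' ht' a
  · have hmem : c ∈ {x | ∃ T' : ((A → ℝ) × (A → ℝ)) → ℝ, IsCoupling T' Q Λ ∧
        x = ∑ᶠ p : (A → ℝ) × (A → ℝ), T' p * wl1 η p.1 p.2} :=
      ⟨T, ⟨hdistT, hmarg1, hmarg2⟩, hc⟩
    have hbdd : BddBelow {x | ∃ T' : ((A → ℝ) × (A → ℝ)) → ℝ, IsCoupling T' Q Λ ∧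
        x = ∑ᶠ p : (A → ℝ) × (A → ℝ), T' p * wl1 η p.1 p.2} := by
      refine ⟨0, fun x hx => ?_⟩
      obtain ⟨T', hT', rfl⟩ := hx
      exact finsum_nonneg fun p => mul_nonneg (hT'.1.1 p) (wl1_nonneg hη0 _ _)
    have h1 : dEM (wl1 η) Q Λ ≤ c := csInf_le hbdd hmem
    calc dEM (wl1 η) Q Λ ≤ c := h1
      _ ≤ D + ρ/2 := hcost
      _ < ρ := by linarith
end

section
/- Fix s, q ∈ ℕ and ε ∈ (0,1), let A be a finite set, let Λ be a finitely supported distribution on [0,1]^A, and let η, η̃ be two distributions on A with dTV(η, η̃) ≤ ε/s. Then dTV(D_sim(η,Λ), D_sim(η̃,Λ)) ≤ ε. -/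
open scoped BigOperators

open HugeObject

/-!
Conditionally on the row labels `a ∈ A^s`, the matrix of `D_sim(η, Λ)` has a law that does not
depend on `η`; so `D_sim(η, Λ)` is the image of the product distribution `η^{⊗s}` under a Markov
kernel, and a Markov kernel does not increase total variation. A hybrid argument, replacing one
coordinate at a time, gives `dTV(η^{⊗s}, η̃^{⊗s}) ≤ s · dTV(η, η̃)`.
-/

open Function Finset

namespace HugeObject

lemma dTV_eq_sum {Ω : Type*} [Fintype Ω] (μ τ : Ω → ℝ) :
    dTV μ τ = 1 / 2 * ∑ x, |μ x - τ x| := by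
  rw [dTV, finsum_eq_sum_of_fintype]

lemma IsDist.sum_eq_one {Ω : Type*} [Fintype Ω] {μ : Ω → ℝ} (hμ : IsDist μ) :
    ∑ x, μ x = 1 := by
  rw [← finsum_eq_sum_of_fintype]; exact hμ.2.2

section PiSupport

variable {ι X R : Type*} [Fintype ι] [CommSemiring R]
  (f : ι → X → R)

lemma support_prod_apply_subset_piFinset [DecidableEq ι]
    (hf : ∀ i, (support (f i)).Finite) :
    support (fun p : ι → X => ∏ i, f i (p i)) ⊆ Fintype.piFinset fun i => (hf i).toFinset := by
  intro p hp
  refine Fintype.mem_piFinset.2 fun i => (hf i).mem_toFinset.2 fun hi => hp ?_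
  exact prod_eq_zero (mem_univ i) hi

lemma finite_support_prod_apply (hf : ∀ i, (support (f i)).Finite) :
    (support fun p : ι → X => ∏ i, f i (p i)).Finite := by
  classical
  exact (Finset.finite_toSet _).subset (support_prod_apply_subset_piFinset f hf)

lemma prod_finsum_eq_finsum_prod (hf : ∀ i, (support (f i)).Finite) :
    ∏ i, ∑ᶠ x, f i x = ∑ᶠ p : ι → X, ∏ i, f i (p i) := by
  classical
  simp_rw [finsum_eq_sum _ (hf _),
    finsum_eq_sum_of_support_subset _ (support_prod_apply_subset_piFinset f hf)]
  exact prod_univ_sum _ _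

end PiSupport

lemma sum_prod_bernoulli {ι : Type*} [Fintype ι] [DecidableEq ι] (p : ι → ℝ) :
    ∑ x : ι → Bool, ∏ i, (if x i then p i else 1 - p i) = 1 := by
  rw [← Fintype.prod_sum fun i (b : Bool) => if b then p i else 1 - p i]
  simp

lemma dTV_sum_mul_kernel_le {α β : Type*} [Fintype α] [Fintype β] (p p' : α → ℝ)
    (K : α → β → ℝ) (hK0 : ∀ a b, 0 ≤ K a b) (hK1 : ∀ a, ∑ b, K a b = 1) :
    dTV (fun b => ∑ a, p a * K a b) (fun b => ∑ a, p' a * K a b) ≤ dTV p p' := by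
  simp only [dTV_eq_sum]
  gcongr
  calc ∑ b, |∑ a, p a * K a b - ∑ a, p' a * K a b|
      = ∑ b, |∑ a, (p a - p' a) * K a b| := by simp only [← sum_sub_distrib, sub_mul]
    _ ≤ ∑ b, ∑ a, |p a - p' a| * K a b := by
        gcongr with b
        refine (abs_sum_le_sum_abs _ _).trans_eq (sum_congr rfl fun a _ => ?_)
        rw [abs_mul, abs_of_nonneg (hK0 a b)]
    _ = ∑ a, |p a - p' a| := by
        rw [sum_comm]
        simp only [← mul_sum, hK1, mul_one]

lemma sum_abs_pi_sub_pi_le {A : Type*} [Fintype A] (η η' : A → ℝ) (hη0 : ∀ x, 0 ≤ η x)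
    (hη1 : ∑ x, η x = 1) (hη'0 : ∀ x, 0 ≤ η' x) (hη'1 : ∑ x, η' x = 1) (s : ℕ) :
    ∑ a : Fin s → A, |∏ i, η (a i) - ∏ i, η' (a i)| ≤ s * ∑ x, |η x - η' x| := by
  induction s with
  | zero => simp
  | succ n ih =>
    set δ := ∑ x, |η x - η' x|
    have hP'1 : ∑ a : Fin n → A, ∏ i, η' (a i) = 1 := by
      rw [← Fintype.sum_pow, hη'1, one_pow]
    have hsplit (x : A) (a : Fin n → A) :
        |η x * ∏ i, η (a i) - η' x * ∏ i, η' (a i)|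
          ≤ η x * |∏ i, η (a i) - ∏ i, η' (a i)| + |η x - η' x| * ∏ i, η' (a i) := by
      calc _ = |η x * (∏ i, η (a i) - ∏ i, η' (a i))
              + (η x - η' x) * ∏ i, η' (a i)| := by ring_nf
        _ ≤ _ := by
            refine (abs_add_le _ _).trans_eq ?_
            rw [abs_mul, abs_mul, abs_of_nonneg (hη0 x),
              abs_of_nonneg (prod_nonneg fun i _ => hη'0 _)]
    calc ∑ a : Fin (n + 1) → A, |∏ i, η (a i) - ∏ i, η' (a i)|
        = ∑ x, ∑ a : Fin n → A, |η x * ∏ i, η (a i) - η' x * ∏ i, η' (a i)| := by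
          rw [← (Fin.consEquiv fun _ => A).sum_comp, Fintype.sum_prod_type]
          simp [Fin.consEquiv, Fin.prod_univ_succ]
      _ ≤ ∑ x, ∑ a : Fin n → A,
            (η x * |∏ i, η (a i) - ∏ i, η' (a i)| + |η x - η' x| * ∏ i, η' (a i)) := by
          gcongr with x _ a; exact hsplit x a
      _ = (∑ x, η x) * ∑ a : Fin n → A, |∏ i, η (a i) - ∏ i, η' (a i)|
            + δ * ∑ a : Fin n → A, ∏ i, η' (a i) := by
          simp only [sum_add_distrib, ← mul_sum, ← sum_mul]
          rfl
      _ ≤ (n + 1 : ℕ) * δ := by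
          rw [hη1, hP'1]
          push_cast
          linarith

lemma dTV_pi_le {A : Type*} [Fintype A] {η η' : A → ℝ} (hη : IsDist η) (hη' : IsDist η')
    (s : ℕ) : dTV (fun a : Fin s → A => ∏ i, η (a i)) (fun a => ∏ i, η' (a i)) ≤
      s * dTV η η' := by
  rw [dTV_eq_sum, dTV_eq_sum, mul_left_comm]
  gcongr
  exact sum_abs_pi_sub_pi_le η η' hη.1 hη.sum_eq_one hη'.1 hη'.sum_eq_one s

section Simulation

variable {A : Type*} {s q : ℕ}

/-- The law of the matrix `M` in `D_sim(η, Λ)` conditionally on the row labels `a`. -/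
noncomputable def simKernel (Λ : (A → ℝ) → ℝ) (a : Fin s → A) (M : Fin s → Fin q → Bool) :
    ℝ :=
  ∑ᶠ T : Fin q → A → ℝ,
    (∏ j, Λ (T j)) * ∏ i, ∏ j, if M i j then T j (a i) else 1 - T j (a i)

lemma Dsim_eq_sum_mul_simKernel [Fintype A] (η : A → ℝ) {Λ : (A → ℝ) → ℝ}
    (hΛ : (support Λ).Finite) :
    Dsim s q η Λ = fun M => ∑ a, (∏ i, η (a i)) * simKernel Λ a M := by
  classical
  funext M
  simp only [Dsim, simKernel, mul_finsum]
  rw [← finsum_sum_comm]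
  · simp only [mul_sum, mul_left_comm]
  · intro a _
    refine (finite_support_prod_apply (fun _ => Λ) fun _ => hΛ).subset fun T hT => ?_
    exact left_ne_zero_of_mul (right_ne_zero_of_mul hT)

lemma simKernel_nonneg {Λ : (A → ℝ) → ℝ} (hΛ0 : ∀ t, 0 ≤ Λ t) (hΛ01 : SuppIn01 Λ)
    (a : Fin s → A) (M : Fin s → Fin q → Bool) : 0 ≤ simKernel Λ a M := by
  refine finsum_nonneg fun T => ?_
  by_cases hw : ∏ j, Λ (T j) = 0
  · simp [hw]
  refine mul_nonneg (prod_nonneg fun j _ => hΛ0 _)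
    (prod_nonneg fun i _ => prod_nonneg fun j _ => ?_)
  obtain ⟨h0, h1⟩ := hΛ01 (T j) (prod_ne_zero_iff.1 hw j (mem_univ j)) (a i)
  split_ifs <;> linarith

lemma sum_simKernel {Λ : (A → ℝ) → ℝ} (hΛ : IsDist Λ) (a : Fin s → A) :
    ∑ M : Fin s → Fin q → Bool, simKernel Λ a M = 1 := by
  classical
  have hbernoulli (T : Fin q → A → ℝ) :
      ∑ M : Fin s → Fin q → Bool,
        ∏ i, ∏ j, (if M i j then T j (a i) else 1 - T j (a i)) = 1 := by
    rw [← Fintype.prod_sum fun i (m : Fin q → Bool) =>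
      ∏ j, if m j then T j (a i) else 1 - T j (a i)]
    simp only [sum_prod_bernoulli, prod_const_one]
  simp only [simKernel]
  rw [sum_finsum_comm]
  · simp only [← mul_sum, hbernoulli, mul_one]
    rw [← prod_finsum_eq_finsum_prod (fun _ => Λ) fun _ => hΛ.2.1, hΛ.2.2, prod_const_one]
  · intro M _
    refine (finite_support_prod_apply (fun _ => Λ) fun _ => hΛ.2.1).subset fun T hT => ?_
    exact left_ne_zero_of_mul hT

lemma dTV_Dsim_le [Fintype A] {Λ : (A → ℝ) → ℝ} (hΛ : IsDist Λ) (hΛ01 : SuppIn01 Λ)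
    {η η' : A → ℝ} (hη : IsDist η) (hη' : IsDist η') :
    dTV (Dsim s q η Λ) (Dsim s q η' Λ) ≤ s * dTV η η' := by
  rw [Dsim_eq_sum_mul_simKernel η hΛ.2.1, Dsim_eq_sum_mul_simKernel η' hΛ.2.1]
  exact (dTV_sum_mul_kernel_le _ _ _ (simKernel_nonneg hΛ.1 hΛ01) (sum_simKernel hΛ)).trans
    (dTV_pi_le hη hη' s)

end Simulation

end HugeObject

/-- if dTV(η, η̃) ≤ ε/s then the simulated distributions D_sim(η,Λ)
and D_sim(η̃,Λ) are ε-close in total variation distance. -/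
theorem dsim_weight_continuity {A : Type*} [Fintype A] (s q : ℕ) (ε : ℝ)
    (hε : ε ∈ Set.Ioo (0 : ℝ) 1)
    (Λ : (A → ℝ) → ℝ) (hΛ : IsDist Λ) (hΛ01 : SuppIn01 Λ)
    (η η' : A → ℝ) (hη : IsDist η) (hη' : IsDist η')
    (h : dTV η η' ≤ ε / s) :
    dTV (Dsim s q η Λ) (Dsim s q η' Λ) ≤ ε := by
  calc dTV (Dsim s q η Λ) (Dsim s q η' Λ) ≤ s * dTV η η' := dTV_Dsim_le hΛ hΛ01 hη hη'
    _ ≤ s * (ε / s) := by gcongr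
    _ ≤ ε := by
        rcases s.eq_zero_or_pos with rfl | hs
        · simpa using hε.1.le
        · rw [mul_div_cancel₀ _ (by positivity)]
end

section
/- Fix s, q ∈ ℕ and ε ∈ (0,1), let A be a finite set, let η be a distribution on A, and let Λ, Λ̃ be finitely supported distributions on [0,1]^A with d_EM^η(Λ, Λ̃) ≤ ε/(s·q). Then dTV(D_sim(η,Λ), D_sim(η,Λ̃)) ≤ ε. -/
open scoped BigOperators

open HugeObject


section AuxProof

open Finset

private lemma bern_sum (p : ℝ) : ∑ b : Bool, (if b then p else 1 - p) = 1 := by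
  rw [Fintype.sum_bool]; norm_num

private lemma bern_diff (p p' : ℝ) :
    ∑ b : Bool, |(if b then p else 1 - p) - (if b then p' else 1 - p')| = 2 * |p - p'| := by
  rw [Fintype.sum_bool]
  norm_num
  rw [abs_sub_comm p' p]
  ring

/-- TV distance between finite products is at most the sum of TV distances. -/
private lemma lemA {β : Type*} [Fintype β] :
    ∀ (n : ℕ) (ν ν' : Fin n → β → ℝ),
      (∀ i b, 0 ≤ ν i b) → (∀ i b, 0 ≤ ν' i b) →
      (∀ i, ∑ b, ν i b = 1) → (∀ i, ∑ b, ν' i b = 1) →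
      ∑ r : Fin n → β, |(∏ i, ν i (r i)) - ∏ i, ν' i (r i)| ≤ ∑ i, ∑ b, |ν i b - ν' i b|
  | 0, ν, ν', _, _, _, _ => by simp
  | (n+1), ν, ν', hν, hν', hs, hs' => by
    have ih := lemA n (fun i => ν i.succ) (fun i => ν' i.succ)
      (fun i b => hν _ _) (fun i b => hν' _ _) (fun i => hs _) (fun i => hs' _)
    have key : ∑ r : Fin (n+1) → β, |(∏ i, ν i (r i)) - ∏ i, ν' i (r i)|
        = ∑ p : β × (Fin n → β), |ν 0 p.1 * ∏ i : Fin n, ν i.succ (p.2 i)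
            - ν' 0 p.1 * ∏ i : Fin n, ν' i.succ (p.2 i)| := by
      rw [← Equiv.sum_comp (Fin.consEquiv fun _ => β)
        (fun r => |(∏ i, ν i (r i)) - ∏ i, ν' i (r i)|)]
      refine Fintype.sum_congr _ _ fun p => ?_
      simp [Fin.consEquiv, Fin.prod_univ_succ]
    have hP'one : ∑ r : Fin n → β, ∏ i : Fin n, ν' i.succ (r i) = 1 := by
      rw [← Fintype.piFinset_univ, ← Finset.prod_univ_sum]
      exact Finset.prod_eq_one fun i _ => hs' i.succ
    rw [key, Fintype.sum_prod_type]
    have step : ∀ b : β, ∑ r : Fin n → β,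
        |ν 0 b * ∏ i : Fin n, ν i.succ (r i) - ν' 0 b * ∏ i : Fin n, ν' i.succ (r i)|
        ≤ ν 0 b * (∑ r : Fin n → β, |(∏ i : Fin n, ν i.succ (r i)) - ∏ i : Fin n, ν' i.succ (r i)|)
          + |ν 0 b - ν' 0 b| := by
      intro b
      calc ∑ r : Fin n → β,
          |ν 0 b * ∏ i : Fin n, ν i.succ (r i) - ν' 0 b * ∏ i : Fin n, ν' i.succ (r i)|
          ≤ ∑ r : Fin n → β,
            (ν 0 b * |(∏ i : Fin n, ν i.succ (r i)) - ∏ i : Fin n, ν' i.succ (r i)|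
              + |ν 0 b - ν' 0 b| * ∏ i : Fin n, ν' i.succ (r i)) := by
            refine Finset.sum_le_sum fun r _ => ?_
            have e : ν 0 b * ∏ i : Fin n, ν i.succ (r i) - ν' 0 b * ∏ i : Fin n, ν' i.succ (r i)
                = ν 0 b * ((∏ i : Fin n, ν i.succ (r i)) - ∏ i : Fin n, ν' i.succ (r i))
                  + (ν 0 b - ν' 0 b) * ∏ i : Fin n, ν' i.succ (r i) := by ring
            rw [e]
            refine (abs_add_le _ _).trans ?_
            rw [abs_mul, abs_mul, abs_of_nonneg (hν 0 b),
              abs_of_nonneg (Finset.prod_nonneg fun i _ => hν' i.succ (r i))]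
        _ = ν 0 b * (∑ r : Fin n → β, |(∏ i : Fin n, ν i.succ (r i)) - ∏ i : Fin n, ν' i.succ (r i)|)
              + |ν 0 b - ν' 0 b| := by
            rw [Finset.sum_add_distrib, ← Finset.mul_sum, ← Finset.mul_sum, hP'one, mul_one]
    calc ∑ b : β, ∑ r : Fin n → β,
        |ν 0 b * ∏ i : Fin n, ν i.succ (r i) - ν' 0 b * ∏ i : Fin n, ν' i.succ (r i)|
        ≤ ∑ b : β, (ν 0 b * (∑ r : Fin n → β,
            |(∏ i : Fin n, ν i.succ (r i)) - ∏ i : Fin n, ν' i.succ (r i)|)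
            + |ν 0 b - ν' 0 b|) := Finset.sum_le_sum fun b _ => step b
      _ = (∑ r : Fin n → β, |(∏ i : Fin n, ν i.succ (r i)) - ∏ i : Fin n, ν' i.succ (r i)|)
            + ∑ b : β, |ν 0 b - ν' 0 b| := by
          rw [Finset.sum_add_distrib, ← Finset.sum_mul, hs 0, one_mul]
      _ ≤ (∑ i : Fin n, ∑ b : β, |ν i.succ b - ν' i.succ b|) + ∑ b : β, |ν 0 b - ν' 0 b| := by
          linarith [ih]
      _ = ∑ i : Fin (n+1), ∑ b : β, |ν i b - ν' i b| := by
          rw [Fin.sum_univ_succ]; ring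

/-- Row/column factorization of the inner sum of `Dsim`. -/
private lemma inner_prod {A : Type*} [Fintype A] (s q : ℕ) (η : A → ℝ)
    (T : Fin q → A → ℝ) (M : Fin s → Fin q → Bool) :
    ∑ a : Fin s → A, (∏ i, η (a i)) * ∏ i, ∏ j, (if M i j then T j (a i) else 1 - T j (a i))
      = ∏ i, ∑ a : A, η a * ∏ j, (if M i j then T j a else 1 - T j a) := by
  rw [Finset.prod_univ_sum (fun _ : Fin s => (univ : Finset A))
      (fun i a => η a * ∏ j, (if M i j then T j a else 1 - T j a)), Fintype.piFinset_univ]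
  exact Finset.sum_congr rfl fun a _ => by rw [← Finset.prod_mul_distrib]

private lemma prod_sum_factor {X : Type*} {q : ℕ} (S : Finset X) (h : Fin q → X → ℝ) :
    ∑ P ∈ Fintype.piFinset (fun _ : Fin q => S), ∏ j, h j (P j) = ∏ j, ∑ x ∈ S, h j x :=
  (Finset.prod_univ_sum _ _).symm

private lemma pair_sum {X : Type*} {q : ℕ} (S S' : Finset X) (f : (Fin q → X × X) → ℝ) :
    ∑ P ∈ Fintype.piFinset (fun _ : Fin q => S ×ˢ S'), f P
      = ∑ T ∈ Fintype.piFinset (fun _ : Fin q => S),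
          ∑ T' ∈ Fintype.piFinset (fun _ : Fin q => S'), f (fun j => (T j, T' j)) := by
  have e := Finset.sum_product (s := Fintype.piFinset fun _ : Fin q => S)
    (t := Fintype.piFinset fun _ : Fin q => S')
    (f := fun p : (Fin q → X) × (Fin q → X) => f (fun j => (p.1 j, p.2 j)))
  refine Eq.trans ?_ e
  refine Finset.sum_nbij' (fun P => (fun j => (P j).1, fun j => (P j).2))
    (fun p => fun j => (p.1 j, p.2 j)) ?_ ?_ ?_ ?_ ?_
  · intro P hP
    rw [Fintype.mem_piFinset] at hP
    rw [Finset.mem_product]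
    constructor <;> (rw [Fintype.mem_piFinset]; intro j)
    · exact (Finset.mem_product.1 (hP j)).1
    · exact (Finset.mem_product.1 (hP j)).2
  · intro p hp
    rw [Finset.mem_product] at hp
    rw [Fintype.mem_piFinset]
    intro j
    rw [Finset.mem_product]
    exact ⟨Fintype.mem_piFinset.1 hp.1 j, Fintype.mem_piFinset.1 hp.2 j⟩
  · intro P _; rfl
  · intro p _; rfl
  · intro P _; rfl

/-- Per-pair total variation bound. -/
private lemma pairBound {A : Type*} [Fintype A] (s q : ℕ) (η : A → ℝ)
    (hη0 : ∀ a, 0 ≤ η a) (hη1 : ∑ a : A, η a = 1)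
    (T T' : Fin q → A → ℝ) (hT : ∀ j a, T j a ∈ Set.Icc (0:ℝ) 1)
    (hT' : ∀ j a, T' j a ∈ Set.Icc (0:ℝ) 1) :
    ∑ M : Fin s → Fin q → Bool,
      |(∏ i, ∑ a : A, η a * ∏ j, (if M i j then T j a else 1 - T j a))
        - ∏ i, ∑ a : A, η a * ∏ j, (if M i j then T' j a else 1 - T' j a)|
      ≤ 2 * s * ∑ j, ∑ a : A, η a * |T j a - T' j a| := by
  have bern_nonneg : ∀ (p : ℝ), p ∈ Set.Icc (0:ℝ) 1 → ∀ b : Bool,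
      0 ≤ (if b then p else 1 - p) := by
    intro p hp b
    rcases hp with ⟨h0, h1⟩
    cases b
    · simpa using by linarith
    · simpa using h0
  have g_nonneg : ∀ (U : Fin q → A → ℝ), (∀ j a, U j a ∈ Set.Icc (0:ℝ) 1) →
      ∀ r : Fin q → Bool, 0 ≤ ∑ a : A, η a * ∏ j, (if r j then U j a else 1 - U j a) :=
    fun U hU r => Finset.sum_nonneg fun a _ => mul_nonneg (hη0 a)
      (Finset.prod_nonneg fun j _ => bern_nonneg _ (hU j a) _)
  have g_sum : ∀ (U : Fin q → A → ℝ),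
      ∑ r : Fin q → Bool, ∑ a : A, η a * ∏ j, (if r j then U j a else 1 - U j a) = 1 := by
    intro U
    rw [Finset.sum_comm]
    have : ∀ a : A, ∑ r : Fin q → Bool, η a * ∏ j, (if r j then U j a else 1 - U j a)
        = η a := by
      intro a
      rw [← Finset.mul_sum]
      have e := Finset.prod_univ_sum (fun _ : Fin q => (univ : Finset Bool))
        (fun j b => if b then U j a else 1 - U j a)
      rw [Fintype.piFinset_univ] at e
      rw [← e, Finset.prod_congr rfl fun j _ => bern_sum (U j a)]
      simp
    rw [Finset.sum_congr rfl fun a _ => this a, hη1]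
  -- first application of lemA over rows
  have step1 := lemA (β := Fin q → Bool) s
    (fun _ r => ∑ a : A, η a * ∏ j, (if r j then T j a else 1 - T j a))
    (fun _ r => ∑ a : A, η a * ∏ j, (if r j then T' j a else 1 - T' j a))
    (fun _ r => g_nonneg T hT r) (fun _ r => g_nonneg T' hT' r)
    (fun _ => g_sum T) (fun _ => g_sum T')
  refine le_trans (le_of_eq ?_) (step1.trans ?_)
  · rfl
  -- now bound the inner TV distance
  have inner_bound : ∑ r : Fin q → Bool,
      |(∑ a : A, η a * ∏ j, (if r j then T j a else 1 - T j a))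
        - ∑ a : A, η a * ∏ j, (if r j then T' j a else 1 - T' j a)|
      ≤ 2 * ∑ j, ∑ a : A, η a * |T j a - T' j a| := by
    have h1 : ∀ r : Fin q → Bool,
        |(∑ a : A, η a * ∏ j, (if r j then T j a else 1 - T j a))
          - ∑ a : A, η a * ∏ j, (if r j then T' j a else 1 - T' j a)|
        ≤ ∑ a : A, η a * |(∏ j, (if r j then T j a else 1 - T j a))
            - ∏ j, (if r j then T' j a else 1 - T' j a)| := by
      intro r
      rw [← Finset.sum_sub_distrib]
      refine (Finset.abs_sum_le_sum_abs _ _).trans (le_of_eq ?_)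
      refine Finset.sum_congr rfl fun a _ => ?_
      rw [← mul_sub, abs_mul, abs_of_nonneg (hη0 a)]
    refine (Finset.sum_le_sum fun r _ => h1 r).trans ?_
    have swap : ∑ r : Fin q → Bool, ∑ a : A, η a * |(∏ j, (if r j then T j a else 1 - T j a))
          - ∏ j, (if r j then T' j a else 1 - T' j a)|
        = ∑ a : A, ∑ r : Fin q → Bool, η a * |(∏ j, (if r j then T j a else 1 - T j a))
          - ∏ j, (if r j then T' j a else 1 - T' j a)| := Finset.sum_comm
    rw [swap]
    have h2 : ∀ a : A, ∑ r : Fin q → Bool, η a * |(∏ j, (if r j then T j a else 1 - T j a))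
        - ∏ j, (if r j then T' j a else 1 - T' j a)|
        ≤ η a * ∑ j, 2 * |T j a - T' j a| := by
      intro a
      rw [← Finset.mul_sum]
      refine mul_le_mul_of_nonneg_left ?_ (hη0 a)
      have := lemA (β := Bool) q (fun j b => if b then T j a else 1 - T j a)
        (fun j b => if b then T' j a else 1 - T' j a)
        (fun j b => bern_nonneg _ (hT j a) b) (fun j b => bern_nonneg _ (hT' j a) b)
        (fun j => bern_sum (T j a)) (fun j => bern_sum (T' j a))
      refine this.trans (le_of_eq ?_)
      exact Finset.sum_congr rfl fun j _ => bern_diff (T j a) (T' j a)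
    refine (Finset.sum_le_sum fun a _ => h2 a).trans (le_of_eq ?_)
    have swap2 : ∑ a : A, ∑ j, η a * (2 * |T j a - T' j a|)
        = ∑ j, ∑ a : A, η a * (2 * |T j a - T' j a|) := Finset.sum_comm
    calc ∑ a : A, η a * ∑ j, 2 * |T j a - T' j a|
        = ∑ a : A, ∑ j, η a * (2 * |T j a - T' j a|) := by
          refine Finset.sum_congr rfl fun a _ => Finset.mul_sum _ _ _
      _ = ∑ j, ∑ a : A, η a * (2 * |T j a - T' j a|) := swap2
      _ = 2 * ∑ j, ∑ a : A, η a * |T j a - T' j a| := by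
          rw [Finset.mul_sum]
          refine Finset.sum_congr rfl fun j _ => ?_
          rw [Finset.mul_sum]
          exact Finset.sum_congr rfl fun a _ => by ring
  · calc ∑ _i : Fin s, ∑ r : Fin q → Bool,
        |(∑ a : A, η a * ∏ j, (if r j then T j a else 1 - T j a))
          - ∑ a : A, η a * ∏ j, (if r j then T' j a else 1 - T' j a)|
        ≤ ∑ _i : Fin s, 2 * ∑ j, ∑ a : A, η a * |T j a - T' j a| :=
          Finset.sum_le_sum fun i _ => inner_bound
      _ = 2 * s * ∑ j, ∑ a : A, η a * |T j a - T' j a| := by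
          rw [Finset.sum_const, Finset.card_univ, Fintype.card_fin, nsmul_eq_mul]; ring

private lemma sum_comm3 {α β γ : Type*} [Fintype γ] (s : Finset α) (t : Finset β)
    (f : α → β → γ → ℝ) :
    ∑ c : γ, ∑ x ∈ s, ∑ y ∈ t, f x y c = ∑ x ∈ s, ∑ y ∈ t, ∑ c : γ, f x y c := by
  rw [Finset.sum_comm]
  exact Finset.sum_congr rfl fun x _ => Finset.sum_comm

private lemma dsim_eq_sum {A : Type*} [Fintype A] (s q : ℕ) (η : A → ℝ)
    (Λ : (A → ℝ) → ℝ) (hΛfin : (Function.support Λ).Finite) (M : Fin s → Fin q → Bool) :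
    Dsim s q η Λ M = ∑ T ∈ Fintype.piFinset (fun _ : Fin q => hΛfin.toFinset),
      (∏ j, Λ (T j)) * ∏ i, ∑ a : A, η a * ∏ j, (if M i j then T j a else 1 - T j a) := by
  have hsub : Function.support (fun T : Fin q → (A → ℝ) =>
      (∏ j, Λ (T j)) * ∑ a : Fin s → A, (∏ i, η (a i)) *
        ∏ i, ∏ j, (if M i j then T j (a i) else 1 - T j (a i)))
      ⊆ ↑(Fintype.piFinset (fun _ : Fin q => hΛfin.toFinset)) := by
    intro T hT
    by_contra hmem
    apply hT
    rw [Finset.mem_coe, Fintype.mem_piFinset] at hmem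
    push_neg at hmem
    obtain ⟨j, hj⟩ := hmem
    rw [Set.Finite.mem_toFinset, Function.mem_support, not_not] at hj
    have hz : ∏ j, Λ (T j) = 0 := Finset.prod_eq_zero (Finset.mem_univ j) hj
    show (∏ j, Λ (T j)) * _ = 0
    rw [hz, zero_mul]
  rw [show Dsim s q η Λ M = ∑ᶠ T : Fin q → (A → ℝ),
      (∏ j, Λ (T j)) * ∑ a : Fin s → A, (∏ i, η (a i)) *
        ∏ i, ∏ j, (if M i j then T j (a i) else 1 - T j (a i)) from rfl]
  rw [finsum_eq_sum_of_support_subset _ hsub]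
  exact Finset.sum_congr rfl fun T _ => by rw [inner_prod]

private lemma mainBound {A : Type*} [Fintype A] (s q : ℕ) (η : A → ℝ) (hη : IsDist η)
    (Λ Λ' : (A → ℝ) → ℝ) (hΛ : IsDist Λ) (hΛ' : IsDist Λ')
    (hΛ01 : SuppIn01 Λ) (hΛ'01 : SuppIn01 Λ')
    (C : (A → ℝ) × (A → ℝ) → ℝ) (hC : IsCoupling C Λ Λ') :
    dTV (Dsim s q η Λ) (Dsim s q η Λ') ≤ (s * q : ℝ) * ∑ᶠ p, C p * wl1 η p.1 p.2 := by
  obtain ⟨⟨hC0, hCfin, hCsum⟩, hCm1, hCm2⟩ := hC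
  obtain ⟨hΛ0, hΛfin, hΛsum⟩ := hΛ
  obtain ⟨hΛ'0, hΛ'fin, hΛ'sum⟩ := hΛ'
  have hη0 : ∀ a, 0 ≤ η a := hη.1
  have hη1 : ∑ a : A, η a = 1 := by
    rw [← finsum_eq_sum_of_fintype η]; exact hη.2.2
  have hwl1 : ∀ t t' : A → ℝ, wl1 η t t' = ∑ a : A, η a * |t a - t' a| :=
    fun t t' => finsum_eq_sum_of_fintype _
  have hCsupp : ∀ p : (A → ℝ) × (A → ℝ), C p ≠ 0 → Λ p.1 ≠ 0 ∧ Λ' p.2 ≠ 0 := by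
    intro p hp
    have hCp : 0 < C p := lt_of_le_of_ne (hC0 p) (Ne.symm hp)
    constructor
    · have hfin1 : (Function.support fun b => C (p.1, b)).Finite := by
        refine Set.Finite.subset (hCfin.image Prod.snd) ?_
        intro b hb
        exact ⟨(p.1, b), hb, rfl⟩
      have hmem : p.2 ∈ hfin1.toFinset := by
        rw [Set.Finite.mem_toFinset, Function.mem_support]; exact hp
      have hle : C p ≤ ∑ b ∈ hfin1.toFinset, C (p.1, b) :=
        Finset.single_le_sum (fun b _ => hC0 (p.1, b)) hmem
      have : Λ p.1 = ∑ b ∈ hfin1.toFinset, C (p.1, b) := by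
        rw [← hCm1 p.1]; exact finsum_eq_sum _ hfin1
      rw [this]; exact ne_of_gt (lt_of_lt_of_le hCp hle)
    · have hfin2 : (Function.support fun a => C (a, p.2)).Finite := by
        refine Set.Finite.subset (hCfin.image Prod.fst) ?_
        intro a ha
        exact ⟨(a, p.2), ha, rfl⟩
      have hmem : p.1 ∈ hfin2.toFinset := by
        rw [Set.Finite.mem_toFinset, Function.mem_support]; exact hp
      have hle : C p ≤ ∑ a ∈ hfin2.toFinset, C (a, p.2) :=
        Finset.single_le_sum (fun a _ => hC0 (a, p.2)) hmem
      have : Λ' p.2 = ∑ a ∈ hfin2.toFinset, C (a, p.2) := by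
        rw [← hCm2 p.2]; exact finsum_eq_sum _ hfin2
      rw [this]; exact ne_of_gt (lt_of_lt_of_le hCp hle)
  have h1 : ∀ t, ∑ t' ∈ hΛ'fin.toFinset, C (t, t') = Λ t := by
    intro t
    rw [← hCm1 t]
    refine (finsum_eq_sum_of_support_subset _ ?_).symm
    intro b hb
    rw [Finset.mem_coe, Set.Finite.mem_toFinset]
    exact (hCsupp (t, b) hb).2
  have h2 : ∀ b, ∑ t ∈ hΛfin.toFinset, C (t, b) = Λ' b := by
    intro b
    rw [← hCm2 b]
    refine (finsum_eq_sum_of_support_subset _ ?_).symm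
    intro t ht
    rw [Finset.mem_coe, Set.Finite.mem_toFinset]
    exact (hCsupp (t, b) ht).1
  have hΛtot : ∑ t ∈ hΛfin.toFinset, Λ t = 1 := by
    rw [← finsum_eq_sum Λ hΛfin]; exact hΛsum
  have hCtot : ∑ p ∈ hΛfin.toFinset ×ˢ hΛ'fin.toFinset, C p = 1 := by
    rw [Finset.sum_product, Finset.sum_congr rfl fun t _ => h1 t, hΛtot]
  have hcost : ∑ᶠ p, C p * wl1 η p.1 p.2
      = ∑ p ∈ hΛfin.toFinset ×ˢ hΛ'fin.toFinset, C p * wl1 η p.1 p.2 := by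
    refine finsum_eq_sum_of_support_subset _ ?_
    intro p hp
    have hCp : C p ≠ 0 := by
      intro h0
      apply hp
      show C p * wl1 η p.1 p.2 = 0
      rw [h0, zero_mul]
    rw [Finset.mem_coe, Finset.mem_product, Set.Finite.mem_toFinset, Set.Finite.mem_toFinset]
    exact hCsupp p hCp
  have hmem01 : ∀ T ∈ Fintype.piFinset (fun _ : Fin q => hΛfin.toFinset), ∀ (j : Fin q) (a : A), T j a ∈ Set.Icc (0:ℝ) 1 := by
    intro T hT j a
    refine hΛ01 (T j) ?_ a
    have := Fintype.mem_piFinset.1 hT j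
    rwa [Set.Finite.mem_toFinset] at this
  have hmem01' : ∀ T' ∈ Fintype.piFinset (fun _ : Fin q => hΛ'fin.toFinset), ∀ (j : Fin q) (a : A), T' j a ∈ Set.Icc (0:ℝ) 1 := by
    intro T' hT' j a
    refine hΛ'01 (T' j) ?_ a
    have := Fintype.mem_piFinset.1 hT' j
    rwa [Set.Finite.mem_toFinset] at this
  have hCq0 : ∀ (T T' : Fin q → A → ℝ), 0 ≤ ∏ j, C (T j, T' j) :=
    fun T T' => Finset.prod_nonneg fun j _ => hC0 _
  have claim1 : ∀ M : Fin s → Fin q → Bool, Dsim s q η Λ M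
      = ∑ T ∈ Fintype.piFinset (fun _ : Fin q => hΛfin.toFinset), ∑ T' ∈ Fintype.piFinset (fun _ : Fin q => hΛ'fin.toFinset), (∏ j, C (T j, T' j)) * (∏ i, ∑ a : A, η a * ∏ j, (if M i j then T j a else 1 - T j a)) := by
    intro M
    rw [dsim_eq_sum s q η Λ hΛfin M]
    refine Finset.sum_congr rfl fun T _ => ?_
    rw [← Finset.sum_mul]
    congr 1
    rw [prod_sum_factor hΛ'fin.toFinset (fun j t' => C (T j, t'))]
    exact Finset.prod_congr rfl fun j _ => (h1 (T j)).symm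
  have claim2 : ∀ M : Fin s → Fin q → Bool, Dsim s q η Λ' M
      = ∑ T ∈ Fintype.piFinset (fun _ : Fin q => hΛfin.toFinset), ∑ T' ∈ Fintype.piFinset (fun _ : Fin q => hΛ'fin.toFinset), (∏ j, C (T j, T' j)) * (∏ i, ∑ a : A, η a * ∏ j, (if M i j then T' j a else 1 - T' j a)) := by
    intro M
    rw [dsim_eq_sum s q η Λ' hΛ'fin M]
    have sw : ∑ T ∈ Fintype.piFinset (fun _ : Fin q => hΛfin.toFinset), ∑ T' ∈ Fintype.piFinset (fun _ : Fin q => hΛ'fin.toFinset), (∏ j, C (T j, T' j)) * (∏ i, ∑ a : A, η a * ∏ j, (if M i j then T' j a else 1 - T' j a))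
        = ∑ T' ∈ Fintype.piFinset (fun _ : Fin q => hΛ'fin.toFinset), ∑ T ∈ Fintype.piFinset (fun _ : Fin q => hΛfin.toFinset), (∏ j, C (T j, T' j)) * (∏ i, ∑ a : A, η a * ∏ j, (if M i j then T' j a else 1 - T' j a)) := Finset.sum_comm
    rw [sw]
    refine Finset.sum_congr rfl fun T' _ => ?_
    rw [← Finset.sum_mul]
    congr 1
    rw [prod_sum_factor hΛfin.toFinset (fun j t => C (t, T' j))]
    exact Finset.prod_congr rfl fun j _ => (h2 (T' j)).symm
  have stepF : ∀ j0 : Fin q,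
      ∑ T ∈ Fintype.piFinset (fun _ : Fin q => hΛfin.toFinset), ∑ T' ∈ Fintype.piFinset (fun _ : Fin q => hΛ'fin.toFinset),
        (∏ j, C (T j, T' j)) * (∑ a : A, η a * |T j0 a - T' j0 a|) = ∑ p ∈ hΛfin.toFinset ×ˢ hΛ'fin.toFinset, C p * wl1 η p.1 p.2 := by
    intro j0
    refine Eq.trans (pair_sum hΛfin.toFinset hΛ'fin.toFinset
      (fun P => (∏ j, C (P j)) * (∑ a : A, η a * |(P j0).1 a - (P j0).2 a|))).symm ?_
    have e1 : ∀ P : Fin q → (A → ℝ) × (A → ℝ),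
        (∏ j, C (P j)) * (∑ a : A, η a * |(P j0).1 a - (P j0).2 a|)
        = ∏ j, (C (P j) * if j = j0 then ∑ a : A, η a * |(P j).1 a - (P j).2 a| else 1) := by
      intro P
      rw [Finset.prod_mul_distrib]
      congr 1
      rw [Finset.prod_ite_eq' Finset.univ j0
        (fun j => ∑ a : A, η a * |(P j).1 a - (P j).2 a|)]
      simp
    rw [Finset.sum_congr rfl fun P _ => e1 P]
    rw [prod_sum_factor (hΛfin.toFinset ×ˢ hΛ'fin.toFinset)
      (fun j p => C p * if j = j0 then ∑ a : A, η a * |p.1 a - p.2 a| else 1)]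
    have e2 : ∀ j : Fin q,
        (∑ p ∈ hΛfin.toFinset ×ˢ hΛ'fin.toFinset,
          (C p * if j = j0 then ∑ a : A, η a * |p.1 a - p.2 a| else 1))
        = if j = j0 then ∑ p ∈ hΛfin.toFinset ×ˢ hΛ'fin.toFinset, C p * wl1 η p.1 p.2 else 1 := by
      intro j
      by_cases hj : j = j0
      · simp only [hj, if_true]
        exact Finset.sum_congr rfl fun p _ => by rw [hwl1]
      · simp only [hj, if_false]
        rw [Finset.sum_congr rfl fun p _ => mul_one (C p), hCtot]
    rw [Finset.prod_congr rfl fun j _ => e2 j]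
    rw [Finset.prod_ite_eq' Finset.univ j0 (fun _ => ∑ p ∈ hΛfin.toFinset ×ˢ hΛ'fin.toFinset, C p * wl1 η p.1 p.2)]
    simp
  have bound1 : ∀ M : Fin s → Fin q → Bool,
      |Dsim s q η Λ M - Dsim s q η Λ' M|
      ≤ ∑ T ∈ Fintype.piFinset (fun _ : Fin q => hΛfin.toFinset), ∑ T' ∈ Fintype.piFinset (fun _ : Fin q => hΛ'fin.toFinset), (∏ j, C (T j, T' j)) * |(∏ i, ∑ a : A, η a * ∏ j, (if M i j then T j a else 1 - T j a)) - (∏ i, ∑ a : A, η a * ∏ j, (if M i j then T' j a else 1 - T' j a))| := by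
    intro M
    rw [claim1 M, claim2 M, ← Finset.sum_sub_distrib]
    refine (Finset.abs_sum_le_sum_abs _ _).trans (Finset.sum_le_sum fun T _ => ?_)
    rw [← Finset.sum_sub_distrib]
    refine (Finset.abs_sum_le_sum_abs _ _).trans (Finset.sum_le_sum fun T' _ => ?_)
    rw [← mul_sub, abs_mul, abs_of_nonneg (hCq0 T T')]
  have e3 : ∀ T T' : Fin q → A → ℝ,
      (∏ j, C (T j, T' j)) * (2 * (s:ℝ) * (∑ j, ∑ a : A, η a * |T j a - T' j a|))
      = 2 * (s:ℝ) * ∑ j, (∏ j, C (T j, T' j)) * (∑ a : A, η a * |T j a - T' j a|) := by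
    intro T T'
    rw [mul_left_comm, Finset.mul_sum]
  rw [dTV, finsum_eq_sum_of_fintype, hcost]
  calc (1/2 : ℝ) * ∑ M : Fin s → Fin q → Bool, |Dsim s q η Λ M - Dsim s q η Λ' M|
      ≤ (1/2 : ℝ) * ∑ M : Fin s → Fin q → Bool,
          ∑ T ∈ Fintype.piFinset (fun _ : Fin q => hΛfin.toFinset), ∑ T' ∈ Fintype.piFinset (fun _ : Fin q => hΛ'fin.toFinset), (∏ j, C (T j, T' j)) * |(∏ i, ∑ a : A, η a * ∏ j, (if M i j then T j a else 1 - T j a)) - (∏ i, ∑ a : A, η a * ∏ j, (if M i j then T' j a else 1 - T' j a))| :=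
        mul_le_mul_of_nonneg_left (Finset.sum_le_sum fun M _ => bound1 M) (by norm_num)
    _ = (1/2 : ℝ) * ∑ T ∈ Fintype.piFinset (fun _ : Fin q => hΛfin.toFinset), ∑ T' ∈ Fintype.piFinset (fun _ : Fin q => hΛ'fin.toFinset),
          (∏ j, C (T j, T' j)) * ∑ M : Fin s → Fin q → Bool, |(∏ i, ∑ a : A, η a * ∏ j, (if M i j then T j a else 1 - T j a)) - (∏ i, ∑ a : A, η a * ∏ j, (if M i j then T' j a else 1 - T' j a))| := by
        rw [sum_comm3 (γ := Fin s → Fin q → Bool) (Fintype.piFinset (fun _ : Fin q => hΛfin.toFinset)) (Fintype.piFinset (fun _ : Fin q => hΛ'fin.toFinset))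
          (fun T T' M => (∏ j, C (T j, T' j)) * |(∏ i, ∑ a : A, η a * ∏ j, (if M i j then T j a else 1 - T j a)) - (∏ i, ∑ a : A, η a * ∏ j, (if M i j then T' j a else 1 - T' j a))|)]
        congr 1
        exact Finset.sum_congr rfl fun T _ => Finset.sum_congr rfl fun T' _ =>
          (Finset.mul_sum _ _ _).symm
    _ ≤ (1/2 : ℝ) * ∑ T ∈ Fintype.piFinset (fun _ : Fin q => hΛfin.toFinset), ∑ T' ∈ Fintype.piFinset (fun _ : Fin q => hΛ'fin.toFinset),
          (∏ j, C (T j, T' j)) * (2 * (s:ℝ) * (∑ j, ∑ a : A, η a * |T j a - T' j a|)) := by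
        refine mul_le_mul_of_nonneg_left ?_ (by norm_num)
        refine Finset.sum_le_sum fun T hT => Finset.sum_le_sum fun T' hT' => ?_
        exact mul_le_mul_of_nonneg_left
          (pairBound s q η hη0 hη1 T T' (hmem01 T hT) (hmem01' T' hT')) (hCq0 T T')
    _ = (1/2 : ℝ) * (2 * (s:ℝ) * ∑ j : Fin q, ∑ T ∈ Fintype.piFinset (fun _ : Fin q => hΛfin.toFinset), ∑ T' ∈ Fintype.piFinset (fun _ : Fin q => hΛ'fin.toFinset),
          (∏ j, C (T j, T' j)) * (∑ a : A, η a * |T j a - T' j a|)) := by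
        congr 1
        rw [Finset.sum_congr rfl fun T _ => Finset.sum_congr rfl fun T' _ => e3 T T']
        rw [Finset.sum_congr rfl fun T _ => (Finset.mul_sum _ _ _).symm, ← Finset.mul_sum]
        congr 1
        exact (sum_comm3 (γ := Fin q) (Fintype.piFinset (fun _ : Fin q => hΛfin.toFinset)) (Fintype.piFinset (fun _ : Fin q => hΛ'fin.toFinset))
          (fun T T' j => (∏ j, C (T j, T' j)) * (∑ a : A, η a * |T j a - T' j a|))).symm
    _ = (1/2 : ℝ) * (2 * (s:ℝ) * ∑ _j : Fin q, (∑ p ∈ hΛfin.toFinset ×ˢ hΛ'fin.toFinset, C p * wl1 η p.1 p.2)) := by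
        rw [Finset.sum_congr rfl fun j _ => stepF j]
    _ = (s * q : ℝ) * (∑ p ∈ hΛfin.toFinset ×ˢ hΛ'fin.toFinset, C p * wl1 η p.1 p.2) := by
        rw [Finset.sum_const, Finset.card_univ, Fintype.card_fin, nsmul_eq_mul]
        ring

end AuxProof

/-- if d_EM^η(Λ, Λ̃) ≤ ε/(s·q) then the simulated distributions
D_sim(η,Λ) and D_sim(η,Λ̃) are ε-close in total variation distance. -/
theorem dsim_type_continuity {A : Type*} [Fintype A] (s q : ℕ) (ε : ℝ)
    (hε : ε ∈ Set.Ioo (0 : ℝ) 1)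
    (η : A → ℝ) (hη : IsDist η)
    (Λ Λ' : (A → ℝ) → ℝ) (hΛ : IsDist Λ) (hΛ' : IsDist Λ')
    (hΛ01 : SuppIn01 Λ) (hΛ'01 : SuppIn01 Λ')
    (h : dEM (wl1 η) Λ Λ' ≤ ε / (s * q)) :
    dTV (Dsim s q η Λ) (Dsim s q η Λ') ≤ ε := by
  obtain ⟨hε0, hε1⟩ := hε
  obtain ⟨hΛ0, hΛfin, hΛsum⟩ := id hΛ
  obtain ⟨hΛ'0, hΛ'fin, hΛ'sum⟩ := id hΛ'
  have hT0 : IsCoupling (fun p : (A → ℝ) × (A → ℝ) => Λ p.1 * Λ' p.2) Λ Λ' := by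
    refine ⟨⟨fun p => mul_nonneg (hΛ0 p.1) (hΛ'0 p.2), ?_, ?_⟩, ?_, ?_⟩
    · refine Set.Finite.subset (hΛfin.prod hΛ'fin) ?_
      intro p hp
      simp only [Function.mem_support] at hp
      exact mul_ne_zero_iff.1 hp
    · have hsub : Function.support (fun p : (A → ℝ) × (A → ℝ) => Λ p.1 * Λ' p.2)
          ⊆ ↑(hΛfin.toFinset ×ˢ hΛ'fin.toFinset) := by
        intro p hp
        simp only [Function.mem_support] at hp
        rcases mul_ne_zero_iff.1 hp with ⟨ha, hb⟩
        rw [Finset.mem_coe, Finset.mem_product, Set.Finite.mem_toFinset,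
          Set.Finite.mem_toFinset]
        exact ⟨ha, hb⟩
      rw [finsum_eq_sum_of_support_subset _ hsub, Finset.sum_product]
      have e : ∀ t, ∑ t' ∈ hΛ'fin.toFinset, Λ t * Λ' t' = Λ t := by
        intro t
        rw [← Finset.mul_sum, ← finsum_eq_sum Λ' hΛ'fin, hΛ'sum, mul_one]
      rw [Finset.sum_congr rfl fun t _ => e t, ← finsum_eq_sum Λ hΛfin, hΛsum]
    · intro a
      rw [← mul_finsum Λ' (Λ a), hΛ'sum, mul_one]
    · intro b
      rw [← finsum_mul Λ (Λ' b), hΛsum, one_mul]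
  have hne : {c | ∃ T : (A → ℝ) × (A → ℝ) → ℝ, IsCoupling T Λ Λ' ∧
      c = ∑ᶠ p : (A → ℝ) × (A → ℝ), T p * wl1 η p.1 p.2}.Nonempty :=
    ⟨_, ⟨_, hT0, rfl⟩⟩
  have key : ∀ δ : ℝ, 0 < δ →
      dTV (Dsim s q η Λ) (Dsim s q η Λ') ≤ (s * q : ℝ) * (ε / (s * q)) + δ := by
    intro δ hδ
    have hsq0 : (0:ℝ) ≤ (s * q : ℝ) := by positivity
    have hδ' : (0:ℝ) < δ / ((s * q : ℝ) + 1) := by positivity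
    have hlt : dEM (wl1 η) Λ Λ' < ε / (s * q) + δ / ((s * q : ℝ) + 1) :=
      lt_of_le_of_lt h (by linarith)
    rw [dEM] at hlt
    obtain ⟨x, ⟨C, hC, rfl⟩, hx⟩ := exists_lt_of_csInf_lt hne hlt
    refine (mainBound s q η hη Λ Λ' hΛ hΛ' hΛ01 hΛ'01 C hC).trans ?_
    have hratio : (s * q : ℝ) / ((s * q : ℝ) + 1) ≤ 1 := by
      rw [div_le_one (by positivity)]; linarith
    calc (s * q : ℝ) * ∑ᶠ p : (A → ℝ) × (A → ℝ), C p * wl1 η p.1 p.2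
        ≤ (s * q : ℝ) * (ε / (s * q) + δ / ((s * q : ℝ) + 1)) :=
          mul_le_mul_of_nonneg_left (le_of_lt hx) hsq0
      _ = (s * q : ℝ) * (ε / (s * q)) + δ * ((s * q : ℝ) / ((s * q : ℝ) + 1)) := by ring
      _ ≤ (s * q : ℝ) * (ε / (s * q)) + δ * 1 := by
          have := mul_le_mul_of_nonneg_left hratio (le_of_lt hδ)
          linarith
      _ = (s * q : ℝ) * (ε / (s * q)) + δ := by ring
  have hfin : dTV (Dsim s q η Λ) (Dsim s q η Λ') ≤ (s * q : ℝ) * (ε / (s * q)) :=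
    le_of_forall_pos_le_add key
  refine hfin.trans ?_
  by_cases hsq : (s * q : ℝ) = 0
  · rw [hsq, zero_mul]; exact le_of_lt hε0
  · rw [mul_comm, div_mul_cancel₀ ε hsq]
end

section
/- Fix s, q ∈ ℕ and ε ∈ (0,1). Let μ be a distribution on {0,1}^n and let ξ be a detailing of μ with respect to a finite set A, with weight distribution η and type distribution Λ. If ξ is (ε/(3(s+1)), q)-good and n ≥ 6q²(s+1)/ε, then dTV(D_sim(η,Λ), D_test) ≤ ε, where D_test is the canonical (s,q)-distribution for μ. -/
open scoped BigOperators

open HugeObject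


-- Auxiliary lemmas for the proof of Statement 11 --
open Finset

lemma sum_prod_pow {β : Type*} [Fintype β] (s : ℕ) (P : β → ℝ) :
    ∑ M : Fin s → β, ∏ i, P (M i) = (∑ b, P b) ^ s := by
  calc ∑ M : Fin s → β, ∏ i, P (M i)
      = ∑ M ∈ Fintype.piFinset (fun _ : Fin s => univ), ∏ i, P (M i) := by
        rw [Fintype.piFinset_univ]
    _ = ∏ _i : Fin s, ∑ b, P b := (Finset.prod_univ_sum _ _).symm
    _ = (∑ b, P b) ^ s := by simp

lemma hybrid {β : Type*} [Fintype β] {P Q : β → ℝ}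
    (hP : ∀ b, 0 ≤ P b) (hQ : ∀ b, 0 ≤ Q b) (hP1 : ∑ b, P b = 1) (hQ1 : ∑ b, Q b = 1) :
    ∀ s : ℕ, ∑ M : Fin s → β, |(∏ i, P (M i)) - ∏ i, Q (M i)| ≤ s * ∑ b, |P b - Q b|
  | 0 => by simp
  | (s+1) => by
    have ih := hybrid hP hQ hP1 hQ1 s
    let C : β → (Fin s → β) → (Fin (s+1) → β) := fun b M' => Fin.cons b M'
    have hre : ∑ M : Fin (s+1) → β, |(∏ i, P (M i)) - ∏ i, Q (M i)|
        = ∑ p : β × (Fin s → β),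
            |(∏ i, P (C p.1 p.2 i)) - ∏ i, Q (C p.1 p.2 i)| := by
      apply Fintype.sum_equiv (Fin.consEquiv (fun _ => β)).symm
      intro M
      simp [C, Fin.consEquiv, Fin.cons_self_tail]
    rw [hre, Fintype.sum_prod_type]
    have key : ∀ (b : β) (M' : Fin s → β),
        |(∏ i, P (C b M' i)) - ∏ i, Q (C b M' i)|
        ≤ |P b - Q b| * (∏ i, P (M' i)) + Q b * |(∏ i, P (M' i)) - ∏ i, Q (M' i)| := by
      intro b M'
      have hP' : ∏ i, P (C b M' i) = P b * ∏ i, P (M' i) := by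
        rw [Fin.prod_univ_succ]; simp [C]
      have hQ' : ∏ i, Q (C b M' i) = Q b * ∏ i, Q (M' i) := by
        rw [Fin.prod_univ_succ]; simp [C]
      rw [hP', hQ']
      have : P b * ∏ i, P (M' i) - Q b * ∏ i, Q (M' i)
          = (P b - Q b) * (∏ i, P (M' i)) + Q b * ((∏ i, P (M' i)) - ∏ i, Q (M' i)) := by ring
      rw [this]
      refine (abs_add_le _ _).trans ?_
      rw [abs_mul, abs_mul, abs_of_nonneg (Finset.prod_nonneg fun i _ => hP _),
        abs_of_nonneg (hQ b)]
    calc ∑ b : β, ∑ M' : Fin s → β,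
            |(∏ i, P (C b M' i)) - ∏ i, Q (C b M' i)|
        ≤ ∑ b : β, ∑ M' : Fin s → β,
            (|P b - Q b| * (∏ i, P (M' i)) + Q b * |(∏ i, P (M' i)) - ∏ i, Q (M' i)|) := by
          gcongr with b _ M' _; exact key b M'
      _ = (∑ b, |P b - Q b|) * (∑ M' : Fin s → β, ∏ i, P (M' i))
          + (∑ b, Q b) * (∑ M' : Fin s → β, |(∏ i, P (M' i)) - ∏ i, Q (M' i)|) := by
          simp only [Finset.sum_add_distrib, ← Finset.mul_sum, ← Finset.sum_mul]
      _ ≤ (∑ b, |P b - Q b|) * 1 + 1 * (s * ∑ b, |P b - Q b|) := by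
          rw [sum_prod_pow, hP1, one_pow, hQ1]
          linarith [ih]
      _ = (↑(s+1)) * ∑ b, |P b - Q b| := by push_cast; ring

lemma sum_pi_prod {ι : Type*} [Fintype ι] [DecidableEq ι] {γ : Type*} [Fintype γ]
    (f : ι → γ → ℝ) :
    ∑ x : ι → γ, ∏ i, f i (x i) = ∏ i, ∑ z, f i z := by
  rw [Finset.prod_univ_sum, Fintype.piFinset_univ]
open Finset

section DetLemmas
variable {n : ℕ} {A : Type*} [Fintype A] {ξ : (Fin n → Bool) × A → ℝ}
  {μ : (Fin n → Bool) → ℝ}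

lemma xi_nonneg (hξ : IsDetailing ξ μ) (p) : 0 ≤ ξ p := hξ.1.1 p

lemma weight_nonneg' (hξ : IsDetailing ξ μ) (a : A) : 0 ≤ weight ξ a :=
  Finset.sum_nonneg fun x _ => hξ.1.1 (x, a)

lemma sum_weight (hξ : IsDetailing ξ μ) : ∑ a, weight ξ a = 1 := by
  have h1 := hξ.1.2.2
  rw [finsum_eq_sum_of_fintype] at h1
  rw [Fintype.sum_prod_type] at h1
  rw [← h1, Finset.sum_comm]
  rfl

lemma xi_eq_zero (hξ : IsDetailing ξ μ) {a : A} (ha : weight ξ a = 0) (x) : ξ (x, a) = 0 := by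
  have := (Finset.sum_eq_zero_iff_of_nonneg (fun x _ => hξ.1.1 (x, a))).1 ha
  exact this x (Finset.mem_univ x)

lemma typeOf_nonneg (hξ : IsDetailing ξ μ) (i : Fin n) (a : A) : 0 ≤ typeOf ξ i a :=
  div_nonneg (Finset.sum_nonneg fun x _ => by
    split
    · exact hξ.1.1 (x, a)
    · exact le_refl _) (weight_nonneg' hξ a)

lemma typeOf_le_one (hξ : IsDetailing ξ μ) (i : Fin n) (a : A) : typeOf ξ i a ≤ 1 := by
  rcases eq_or_ne (weight ξ a) 0 with h | h
  · simp [typeOf, h]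
  · rw [typeOf, div_le_one ((weight_nonneg' hξ a).lt_of_ne (Ne.symm h))]
    refine Finset.sum_le_sum fun x _ => ?_
    split
    · exact le_refl _
    · exact hξ.1.1 (x, a)

lemma component_nonneg (hξ : IsDetailing ξ μ) (a : A) (x) : 0 ≤ component ξ a x :=
  div_nonneg (hξ.1.1 (x, a)) (weight_nonneg' hξ a)

lemma sum_component (hξ : IsDetailing ξ μ) {a : A} (ha : weight ξ a ≠ 0) :
    ∑ x, component ξ a x = 1 := by
  simp only [component]
  rw [← Finset.sum_div, show ∑ x, ξ (x, a) = weight ξ a from rfl]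
  exact div_self ha

end DetLemmas
section DetLemmas2
variable {n q : ℕ} {A : Type*} [Fintype A] {ξ : (Fin n → Bool) × A → ℝ}
  {μ : (Fin n → Bool) → ℝ}

lemma margAt_component (hξ : IsDetailing ξ μ) {a : A} (ha : weight ξ a ≠ 0)
    (j : Fin n) (b : Bool) :
    margAt (component ξ a) j b = if b then typeOf ξ j a else 1 - typeOf ξ j a := by
  have htrue : margAt (component ξ a) j true = typeOf ξ j a := by
    simp only [margAt, component, typeOf]
    rw [Finset.sum_div]
    apply Finset.sum_congr rfl
    intro x _
    split <;> simp
  have hsum : margAt (component ξ a) j true + margAt (component ξ a) j false = 1 := by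
    simp only [margAt]
    rw [← Finset.sum_add_distrib]
    rw [← sum_component hξ ha]
    apply Finset.sum_congr rfl
    intro x _
    cases hx : x j <;> simp [hx]
  cases b
  · simp only [Bool.false_eq_true, if_false]
    rw [← htrue]
    linarith [hsum]
  · simpa using htrue
end DetLemmas2
section DetLemmas3
variable {n q s : ℕ} {A : Type*} [Fintype A] {ξ : (Fin n → Bool) × A → ℝ}
  {μ : (Fin n → Bool) → ℝ}

lemma jointAt_nonneg {ν : (Fin n → Bool) → ℝ} (hν : ∀ x, 0 ≤ ν x)
    (J : Fin q → Fin n) (y : Fin q → Bool) : 0 ≤ jointAt ν J y :=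
  Finset.sum_nonneg fun x _ => by split; exacts [hν x, le_refl _]

lemma sum_jointAt (ν : (Fin n → Bool) → ℝ) (J : Fin q → Fin n) :
    ∑ y, jointAt ν J y = ∑ x, ν x := by
  simp only [jointAt]
  rw [Finset.sum_comm]
  apply Finset.sum_congr rfl
  intro x _
  have hiff : ∀ y : Fin q → Bool, (∀ ℓ, x (J ℓ) = y ℓ) ↔ ((fun ℓ => x (J ℓ)) = y) :=
    fun y => funext_iff.symm
  simp only [hiff]
  rw [Finset.sum_ite_eq]
  simp

lemma jointAt_mix (hξ : IsDetailing ξ μ) (J : Fin q → Fin n) (y : Fin q → Bool) :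
    jointAt μ J y = ∑ a, weight ξ a * jointAt (component ξ a) J y := by
  simp only [jointAt]
  have : ∀ x : Fin n → Bool, (if ∀ ℓ, x (J ℓ) = y ℓ then μ x else 0)
      = ∑ a : A, (if ∀ ℓ, x (J ℓ) = y ℓ then ξ (x, a) else 0) := by
    intro x
    rw [← hξ.2 x]
    split <;> simp
  rw [Finset.sum_congr rfl fun x _ => this x, Finset.sum_comm]
  apply Finset.sum_congr rfl
  intro a _
  rcases eq_or_ne (weight ξ a) 0 with h | h
  · simp only [h, zero_mul]
    apply Finset.sum_eq_zero
    intro x _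
    rw [xi_eq_zero hξ h x]
    simp
  · rw [Finset.mul_sum]
    apply Finset.sum_congr rfl
    intro x _
    simp only [component]
    split
    · rw [mul_div_cancel₀ _ h]
    · simp

lemma sum_bern (t : Fin q → ℝ) :
    ∑ y : Fin q → Bool, ∏ ℓ, (if y ℓ then t ℓ else 1 - t ℓ) = 1 := by
  have : ∑ y : Fin q → Bool, ∏ ℓ, (if y ℓ then t ℓ else 1 - t ℓ)
      = ∏ ℓ : Fin q, ∑ b : Bool, (if b then t ℓ else 1 - t ℓ) := by
    rw [Finset.prod_univ_sum]
    rw [Fintype.piFinset_univ]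
  rw [this]
  apply Finset.prod_eq_one
  intro ℓ _
  rw [Fintype.sum_bool]
  simp

lemma Dtest_eq (M : Fin s → Fin q → Bool) :
    Dtest s q n μ M = (∑ J : Fin q → Fin n, ∏ i, jointAt μ J (M i)) / (n : ℝ) ^ q := by
  rw [Dtest]
  congr 1
  apply Finset.sum_congr rfl
  intro J _
  have h1 : ∀ x : Fin s → Fin n → Bool,
      (∏ i, μ (x i)) * (if ∀ i ℓ, x i (J ℓ) = M i ℓ then (1:ℝ) else 0)
      = ∏ i, (μ (x i) * (if ∀ ℓ, x i (J ℓ) = M i ℓ then (1:ℝ) else 0)) := by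
    intro x
    rw [Finset.prod_mul_distrib]
    congr 1
    rw [Finset.prod_boole]
    simp
  rw [Finset.sum_congr rfl fun x _ => h1 x]
  have h2 := sum_pi_prod (fun (i : Fin s) (z : Fin n → Bool) =>
    μ z * (if ∀ ℓ, z (J ℓ) = M i ℓ then (1:ℝ) else 0))
  rw [h2]
  apply Finset.prod_congr rfl
  intro i _
  simp only [jointAt]
  apply Finset.sum_congr rfl
  intro z _
  split <;> simp

end DetLemmas3
lemma sum_piFinset_prod {ι : Type*} [Fintype ι] [DecidableEq ι] {γ : Type*} [DecidableEq γ]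
    (S : Finset γ) (f : ι → γ → ℝ) :
    ∑ x ∈ Fintype.piFinset (fun _ : ι => S), ∏ i, f i (x i) = ∏ i, ∑ u ∈ S, f i u :=
  (Finset.prod_univ_sum _ _).symm

section DsimEq
variable {n q s : ℕ} {A : Type*} [Fintype A] {ξ : (Fin n → Bool) × A → ℝ}
  {μ : (Fin n → Bool) → ℝ}

lemma typeDist_eq_card [DecidableEq (A → ℝ)] [DecidablePred fun i : Fin n => True]
    (u : A → ℝ) :
    typeDist ξ u
      = ((Finset.univ.filter (fun i : Fin n => typeOf ξ i = u)).card : ℝ) / n := by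
  classical
  simp only [typeDist, empDist]
  congr 2
  rw [Nat.card_eq_fintype_card, Fintype.card_subtype]

lemma sum_typeDist (F : (A → ℝ) → ℝ) :
    ∑ u ∈ Finset.image (fun i : Fin n => typeOf ξ i) Finset.univ, typeDist ξ u * F u
      = (∑ k : Fin n, F (typeOf ξ k)) / n := by
  classical
  rw [Finset.sum_comp F (fun i : Fin n => typeOf ξ i)]
  rw [Finset.sum_div]
  apply Finset.sum_congr rfl
  intro u _
  rw [typeDist_eq_card u, nsmul_eq_mul, div_mul_eq_mul_div]

lemma Dsim_eq (hn : 0 < n) (M : Fin s → Fin q → Bool) :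
    Dsim s q (weight ξ) (typeDist ξ) M
      = (∑ J : Fin q → Fin n, ∏ i : Fin s, ∑ b : A, weight ξ b *
          ∏ ℓ, (if M i ℓ then typeOf ξ (J ℓ) b else 1 - typeOf ξ (J ℓ) b))
        / (n : ℝ) ^ q := by
  classical
  set S : Finset (A → ℝ) := Finset.image (fun i : Fin n => typeOf ξ i) Finset.univ with hS
  have hsupp : (Function.support fun T : Fin q → (A → ℝ) =>
      (∏ j, typeDist ξ (T j)) * ∑ a : Fin s → A, (∏ i, weight ξ (a i)) *
        ∏ i, ∏ j, (if M i j then T j (a i) else 1 - T j (a i)))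
      ⊆ ↑(Fintype.piFinset fun _ : Fin q => S) := by
    intro T hT
    simp only [Function.mem_support] at hT
    have h1 : ∀ j, typeDist ξ (T j) ≠ 0 := by
      intro j hj
      exact hT (by rw [Finset.prod_eq_zero (Finset.mem_univ j) hj, zero_mul])
    rw [Finset.mem_coe, Fintype.mem_piFinset]
    intro j
    have h0 : Nat.card {i : Fin n // typeOf ξ i = T j} ≠ 0 := by
      intro h0
      have he : typeDist ξ (T j)
          = (Nat.card {i : Fin n // typeOf ξ i = T j} : ℝ) / n := rfl
      exact h1 j (by rw [he, h0]; simp)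
    obtain ⟨i, hi⟩ := (Nat.card_ne_zero.mp h0).1
    exact Finset.mem_image.mpr ⟨i, Finset.mem_univ i, hi⟩
  rw [Dsim, finsum_eq_finset_sum_of_support_subset _ hsupp]
  calc ∑ T ∈ Fintype.piFinset (fun _ : Fin q => S),
        (∏ j, typeDist ξ (T j)) * ∑ a : Fin s → A, (∏ i, weight ξ (a i)) *
          ∏ i, ∏ j, (if M i j then T j (a i) else 1 - T j (a i))
      = ∑ T ∈ Fintype.piFinset (fun _ : Fin q => S), ∑ a : Fin s → A,
          (∏ i, weight ξ (a i)) *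
          ∏ j, (typeDist ξ (T j) * ∏ i, (if M i j then T j (a i) else 1 - T j (a i))) := by
        apply Finset.sum_congr rfl
        intro T _
        rw [Finset.mul_sum]
        apply Finset.sum_congr rfl
        intro a _
        rw [Finset.prod_mul_distrib, Finset.prod_comm]
        ring
    _ = ∑ a : Fin s → A, (∏ i, weight ξ (a i)) *
          ∏ j, ∑ u ∈ S, (typeDist ξ u * ∏ i, (if M i j then u (a i) else 1 - u (a i))) := by
        rw [Finset.sum_comm]
        apply Finset.sum_congr rfl
        intro a _
        rw [← Finset.mul_sum]
        congr 1
        exact sum_piFinset_prod S (fun j u =>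
          typeDist ξ u * ∏ i, (if M i j then u (a i) else 1 - u (a i)))
    _ = ∑ a : Fin s → A, (∏ i, weight ξ (a i)) *
          ((∏ j, ∑ k : Fin n, ∏ i,
            (if M i j then typeOf ξ k (a i) else 1 - typeOf ξ k (a i))) / (n : ℝ) ^ q) := by
        apply Finset.sum_congr rfl
        intro a _
        congr 1
        have hpow : ((n : ℝ)) ^ q = ∏ _j : Fin q, (n : ℝ) := by
          simp
        rw [hpow, ← Finset.prod_div_distrib]
        apply Finset.prod_congr rfl
        intro j _
        exact sum_typeDist (fun u => ∏ i, (if M i j then u (a i) else 1 - u (a i)))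
    _ = (∑ a : Fin s → A, (∏ i, weight ξ (a i)) *
          ∑ J : Fin q → Fin n, ∏ j, ∏ i,
            (if M i j then typeOf ξ (J j) (a i) else 1 - typeOf ξ (J j) (a i))) / (n : ℝ) ^ q := by
        rw [Finset.sum_div]
        apply Finset.sum_congr rfl
        intro a _
        rw [mul_div_assoc]
        congr 2
        exact (sum_pi_prod (fun (j : Fin q) (k : Fin n) =>
          ∏ i, (if M i j then typeOf ξ k (a i) else 1 - typeOf ξ k (a i)))).symm
    _ = (∑ J : Fin q → Fin n, ∏ i : Fin s, ∑ b : A, weight ξ b *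
          ∏ ℓ, (if M i ℓ then typeOf ξ (J ℓ) b else 1 - typeOf ξ (J ℓ) b)) / (n : ℝ) ^ q := by
        congr 1
        calc ∑ a : Fin s → A, (∏ i, weight ξ (a i)) *
              ∑ J : Fin q → Fin n, ∏ j, ∏ i,
                (if M i j then typeOf ξ (J j) (a i) else 1 - typeOf ξ (J j) (a i))
            = ∑ J : Fin q → Fin n, ∑ a : Fin s → A, (∏ i, weight ξ (a i)) *
              ∏ j, ∏ i, (if M i j then typeOf ξ (J j) (a i) else 1 - typeOf ξ (J j) (a i)) := by
              simp only [Finset.mul_sum]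
              exact Finset.sum_comm
          _ = ∑ J : Fin q → Fin n, ∏ i : Fin s, ∑ b : A, weight ξ b *
              ∏ ℓ, (if M i ℓ then typeOf ξ (J ℓ) b else 1 - typeOf ξ (J ℓ) b) := by
              apply Finset.sum_congr rfl
              intro J _
              calc ∑ a : Fin s → A, (∏ i, weight ξ (a i)) *
                    ∏ j, ∏ i, (if M i j then typeOf ξ (J j) (a i) else 1 - typeOf ξ (J j) (a i))
                  = ∑ a : Fin s → A, ∏ i, (weight ξ (a i) *
                      ∏ ℓ, (if M i ℓ then typeOf ξ (J ℓ) (a i) else 1 - typeOf ξ (J ℓ) (a i))) := by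
                    apply Finset.sum_congr rfl
                    intro a _
                    rw [Finset.prod_mul_distrib]
                    congr 1
                    exact Finset.prod_comm
                _ = ∏ i : Fin s, ∑ b : A, weight ξ b *
                    ∏ ℓ, (if M i ℓ then typeOf ξ (J ℓ) b else 1 - typeOf ξ (J ℓ) b) :=
                    sum_pi_prod (fun (i : Fin s) (b : A) => weight ξ b *
                      ∏ ℓ, (if M i ℓ then typeOf ξ (J ℓ) b else 1 - typeOf ξ (J ℓ) b))
end DsimEq

/-- for an (ε/(3(s+1)), q)-good detailing ξ of μ with weight
distribution η and type distribution Λ, if n ≥ 6q²(s+1)/ε then the simulated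
distribution D_sim(η,Λ) is ε-close to the canonical (s,q)-distribution of μ. -/
theorem dsim_close_to_dtest {A : Type*} [Fintype A] (n s q : ℕ) (ε : ℝ)
    (hε : ε ∈ Set.Ioo (0 : ℝ) 1)
    (μ : (Fin n → Bool) → ℝ) (hμ : IsDist μ)
    (ξ : (Fin n → Bool) × A → ℝ) (hξ : IsDetailing ξ μ)
    (hgood : IsGoodDetailing (ε / (3 * (s + 1))) q ξ)
    (hn : 6 * q ^ 2 * (s + 1) / ε ≤ (n : ℝ)) :
    dTV (Dsim s q (weight ξ) (typeDist ξ)) (Dtest s q n μ) ≤ ε := by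
  classical
  obtain ⟨hε0, hε1⟩ := hε
  obtain ⟨Jg, hJg1, hJg2⟩ := hgood
  have hμnn : ∀ x, 0 ≤ μ x := hμ.1
  have hμ1 : ∑ x, μ x = 1 := by
    have h := hμ.2.2; rwa [finsum_eq_sum_of_fintype] at h
  have hwnn : ∀ a, 0 ≤ weight ξ a := weight_nonneg' hξ
  have hw1 : ∑ a, weight ξ a = 1 := sum_weight hξ
  set ε' : ℝ := ε / (3 * (s + 1)) with hε'def
  have hs1 : (0:ℝ) < 3 * ((s:ℝ) + 1) := by positivity
  have hε'pos : 0 < ε' := div_pos hε0 hs1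
  rcases Nat.eq_zero_or_pos q with hq0 | hq
  · subst hq0
    have hDs : ∀ M : Fin s → Fin 0 → Bool,
        Dsim s 0 (weight ξ) (typeDist ξ) M = 1 := by
      intro M
      rw [show Dsim s 0 (weight ξ) (typeDist ξ) M
          = ∑ᶠ T : Fin 0 → (A → ℝ), (∏ j, typeDist ξ (T j)) *
              ∑ a : Fin s → A, (∏ i, weight ξ (a i)) *
                ∏ i : Fin s, ∏ j : Fin 0, (if M i j then T j (a i) else 1 - T j (a i))
          from rfl]
      rw [finsum_unique]
      simp [sum_prod_pow, hw1]
    have hDt : ∀ M : Fin s → Fin 0 → Bool, Dtest s 0 n μ M = 1 := by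
      intro M
      rw [show Dtest s 0 n μ M
          = (∑ J : Fin 0 → Fin n, ∑ x : Fin s → Fin n → Bool,
              (∏ i, μ (x i)) * (if ∀ i ℓ, x i (J ℓ) = M i ℓ then (1:ℝ) else 0)) / (n:ℝ)^0
          from rfl]
      simp [sum_prod_pow, hμ1]
    have h0 : dTV (Dsim s 0 (weight ξ) (typeDist ξ)) (Dtest s 0 n μ) = 0 := by
      rw [dTV]
      have hz : ∀ M, |Dsim s 0 (weight ξ) (typeDist ξ) M - Dtest s 0 n μ M| = 0 :=
        fun M => by rw [hDs M, hDt M]; simp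
      rw [finsum_congr hz, finsum_zero, mul_zero]
    linarith
  -- main case : q ≥ 1
  have hn0 : 0 < n := by
    rcases Nat.eq_zero_or_pos n with h0 | h0
    · exfalso
      have hq1 : (1:ℝ) ≤ (q:ℝ) := by exact_mod_cast hq
      have hpos : (0:ℝ) < 6 * (q:ℝ)^2 * ((s:ℝ)+1) / ε := by positivity
      rw [h0] at hn
      push_cast at hn
      linarith
    · exact h0
  set N : ℝ := (n : ℝ) ^ q with hNdef
  have hN : 0 < N := by rw [hNdef]; positivity
  set P : (Fin q → Fin n) → (Fin q → Bool) → ℝ := fun J y => ∑ b : A, weight ξ b *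
    ∏ ℓ, (if y ℓ then typeOf ξ (J ℓ) b else 1 - typeOf ξ (J ℓ) b) with hPdef
  set D : A → (Fin q → Fin n) → ℝ := fun a J => ∑ y : Fin q → Bool,
    |(∏ ℓ, (if y ℓ then typeOf ξ (J ℓ) a else 1 - typeOf ξ (J ℓ) a))
      - jointAt (component ξ a) J y| with hDdef
  have hbern_nn : ∀ (a : A) (J : Fin q → Fin n) (y : Fin q → Bool),
      0 ≤ ∏ ℓ, (if y ℓ then typeOf ξ (J ℓ) a else 1 - typeOf ξ (J ℓ) a) := by
    intro a J y
    apply Finset.prod_nonneg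
    intro ℓ _
    split
    · exact typeOf_nonneg hξ _ _
    · linarith [typeOf_le_one hξ (J ℓ) a]
  have hPnn : ∀ J y, 0 ≤ P J y := by
    intro J y
    apply Finset.sum_nonneg
    intro b _
    exact mul_nonneg (hwnn b) (hbern_nn b J y)
  have hPsum : ∀ J, ∑ y, P J y = 1 := by
    intro J
    rw [hPdef]
    dsimp only
    rw [Finset.sum_comm]
    calc ∑ b : A, ∑ y : Fin q → Bool, weight ξ b *
          ∏ ℓ, (if y ℓ then typeOf ξ (J ℓ) b else 1 - typeOf ξ (J ℓ) b)
        = ∑ b : A, weight ξ b := by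
          apply Finset.sum_congr rfl
          intro b _
          rw [← Finset.mul_sum, sum_bern (fun ℓ => typeOf ξ (J ℓ) b), mul_one]
      _ = 1 := hw1
  have hQsum : ∀ J : Fin q → Fin n, ∑ y, jointAt μ J y = 1 := by
    intro J; rw [sum_jointAt, hμ1]
  have hcomp_le : ∀ a, ∑ x, component ξ a x ≤ 1 := by
    intro a
    rcases eq_or_ne (weight ξ a) 0 with h | h
    · have hc : ∀ x, component ξ a x = 0 := by
        intro x; simp [component, xi_eq_zero hξ h x]
      simp [hc]
    · rw [sum_component hξ h]
  have hD2 : ∀ a J, D a J ≤ 2 := by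
    intro a J
    rw [hDdef]
    dsimp only
    calc ∑ y : Fin q → Bool, |(∏ ℓ, (if y ℓ then typeOf ξ (J ℓ) a else 1 - typeOf ξ (J ℓ) a))
            - jointAt (component ξ a) J y|
        ≤ ∑ y : Fin q → Bool,
            ((∏ ℓ, (if y ℓ then typeOf ξ (J ℓ) a else 1 - typeOf ξ (J ℓ) a))
              + jointAt (component ξ a) J y) := by
          apply Finset.sum_le_sum
          intro y _
          refine (abs_sub _ _).trans ?_
          rw [abs_of_nonneg (hbern_nn a J y),
            abs_of_nonneg (jointAt_nonneg (component_nonneg hξ a) J y)]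
      _ = 1 + ∑ x, component ξ a x := by
          rw [Finset.sum_add_distrib, sum_bern (fun ℓ => typeOf ξ (J ℓ) a), sum_jointAt]
      _ ≤ 2 := by linarith [hcomp_le a]
  have hcardN : ((Fintype.card (Fin q → Fin n) : ℕ) : ℝ) = N := by
    rw [Fintype.card_fun, Fintype.card_fin, Fintype.card_fin, hNdef]
    push_cast
    rfl
  have hallB : ∀ a, ∑ J, D a J ≤ 2 * N := by
    intro a
    calc ∑ J, D a J ≤ ∑ _J : Fin q → Fin n, (2:ℝ) :=
        Finset.sum_le_sum fun J _ => hD2 a J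
      _ = 2 * N := by
        rw [Finset.sum_const, Finset.card_univ, nsmul_eq_mul, hcardN]
        ring
  have hgoodB : ∀ a ∈ Jg, weight ξ a ≠ 0 → ∑ J, D a J ≤ 4 * ε' * N := by
    intro a ha h
    set G : Finset (Fin q → Fin n) :=
      Finset.univ.filter (fun J => EpsIndep ε' (component ξ a) J) with hGdef
    have hGcard : (1 - ε') * N ≤ (G.card : ℝ) := by
      have hg : (1 - ε') * (n : ℝ) ^ q
          ≤ (Nat.card {J : Fin q → Fin n // EpsIndep ε' (component ξ a) J} : ℝ) :=
        hJg2 a ha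
      rw [Nat.card_eq_fintype_card, Fintype.card_subtype] at hg
      rw [hNdef]
      exact_mod_cast hg
    have hDeps : ∀ J ∈ G, D a J ≤ 2 * ε' := by
      intro J hJ
      have hJind : EpsIndep ε' (component ξ a) J := (Finset.mem_filter.mp hJ).2
      have hJind' : (1/2) * ∑ᶠ y : Fin q → Bool, |jointAt (component ξ a) J y
          - ∏ ℓ, margAt (component ξ a) (J ℓ) (y ℓ)| ≤ ε' := hJind
      rw [finsum_eq_sum_of_fintype] at hJind'
      rw [hDdef]
      dsimp only
      have heq : ∀ y : Fin q → Bool,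
          |(∏ ℓ, (if y ℓ then typeOf ξ (J ℓ) a else 1 - typeOf ξ (J ℓ) a))
            - jointAt (component ξ a) J y|
          = |jointAt (component ξ a) J y - ∏ ℓ, margAt (component ξ a) (J ℓ) (y ℓ)| := by
        intro y
        rw [abs_sub_comm]
        congr 2
        apply Finset.prod_congr rfl
        intro ℓ _
        rw [margAt_component hξ h (J ℓ) (y ℓ)]
      rw [Finset.sum_congr rfl fun y _ => heq y]
      linarith
    have hGle : (G.card : ℝ) ≤ N := by
      rw [← hcardN]
      exact_mod_cast Finset.card_le_univ G
    have hsd : (((Finset.univ \ G).card : ℕ) : ℝ) = N - G.card := by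
      rw [Finset.card_univ_diff, Nat.cast_sub (Finset.card_le_univ G), hcardN]
    have hsd' : (((Finset.univ \ G).card : ℕ) : ℝ) ≤ ε' * N := by
      rw [hsd]; linarith
    calc ∑ J, D a J = ∑ J ∈ Finset.univ \ G, D a J + ∑ J ∈ G, D a J :=
        (Finset.sum_sdiff (Finset.subset_univ G)).symm
      _ ≤ ∑ _J ∈ Finset.univ \ G, (2:ℝ) + ∑ _J ∈ G, 2 * ε' := by
        gcongr with J hJ J hJ
        · exact hD2 a J
        · exact hDeps J hJ
      _ = 2 * ((Finset.univ \ G).card : ℝ) + 2 * ε' * (G.card : ℝ) := by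
        rw [Finset.sum_const, Finset.sum_const, nsmul_eq_mul, nsmul_eq_mul]
        ring
      _ ≤ 2 * (ε' * N) + 2 * ε' * N := by
        gcongr
      _ = 4 * ε' * N := by ring
  have hrow : ∀ J : Fin q → Fin n,
      ∑ y, |P J y - jointAt μ J y| ≤ ∑ a, weight ξ a * D a J := by
    intro J
    have hy : ∀ y : Fin q → Bool, |P J y - jointAt μ J y| ≤ ∑ a, weight ξ a *
        |(∏ ℓ, (if y ℓ then typeOf ξ (J ℓ) a else 1 - typeOf ξ (J ℓ) a))
          - jointAt (component ξ a) J y| := by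
      intro y
      rw [jointAt_mix hξ J y, hPdef]
      dsimp only
      rw [← Finset.sum_sub_distrib]
      refine (Finset.abs_sum_le_sum_abs _ _).trans ?_
      apply Finset.sum_le_sum
      intro a _
      rw [← mul_sub, abs_mul, abs_of_nonneg (hwnn a)]
    calc ∑ y, |P J y - jointAt μ J y|
        ≤ ∑ y : Fin q → Bool, ∑ a, weight ξ a *
            |(∏ ℓ, (if y ℓ then typeOf ξ (J ℓ) a else 1 - typeOf ξ (J ℓ) a))
              - jointAt (component ξ a) J y| := Finset.sum_le_sum fun y _ => hy y
      _ = ∑ a, weight ξ a * D a J := by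
          rw [Finset.sum_comm]
          apply Finset.sum_congr rfl
          intro a _
          rw [hDdef]
          dsimp only
          rw [Finset.mul_sum]
  have hJgle : ∑ a ∈ Jg, weight ξ a ≤ 1 := by
    rw [← hw1]
    exact Finset.sum_le_sum_of_subset_of_nonneg (Finset.subset_univ Jg)
      (fun a _ _ => hwnn a)
  have hout : ∑ a ∈ Finset.univ \ Jg, weight ξ a ≤ ε' := by
    have := Finset.sum_sdiff (Finset.subset_univ Jg) (f := fun a => weight ξ a)
    rw [hw1] at this
    linarith
  have hDnn : ∀ a J, 0 ≤ D a J := fun a J => Finset.sum_nonneg fun y _ => abs_nonneg _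
  have hfinal : ∑ a, weight ξ a * ∑ J, D a J ≤ 6 * ε' * N := by
    have hsplit : ∑ a, weight ξ a * ∑ J, D a J
        = ∑ a ∈ Finset.univ \ Jg, weight ξ a * ∑ J, D a J
          + ∑ a ∈ Jg, weight ξ a * ∑ J, D a J :=
      (Finset.sum_sdiff (Finset.subset_univ Jg)).symm
    rw [hsplit]
    have h2 : ∑ a ∈ Jg, weight ξ a * ∑ J, D a J ≤ (∑ a ∈ Jg, weight ξ a) * (4 * ε' * N) := by
      rw [Finset.sum_mul]
      apply Finset.sum_le_sum
      intro a ha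
      rcases eq_or_ne (weight ξ a) 0 with hw0 | hw0
      · rw [hw0]; simp
      · exact mul_le_mul_of_nonneg_left (hgoodB a ha hw0) (hwnn a)
    have h3 : ∑ a ∈ Finset.univ \ Jg, weight ξ a * ∑ J, D a J
        ≤ (∑ a ∈ Finset.univ \ Jg, weight ξ a) * (2 * N) := by
      rw [Finset.sum_mul]
      apply Finset.sum_le_sum
      intro a _
      exact mul_le_mul_of_nonneg_left (hallB a) (hwnn a)
    have h4 : (∑ a ∈ Jg, weight ξ a) * (4 * ε' * N) ≤ 1 * (4 * ε' * N) := by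
      apply mul_le_mul_of_nonneg_right hJgle
      positivity
    have h5 : (∑ a ∈ Finset.univ \ Jg, weight ξ a) * (2 * N) ≤ ε' * (2 * N) := by
      apply mul_le_mul_of_nonneg_right hout
      positivity
    linarith
  have h1 : ∀ M : Fin s → Fin q → Bool,
      |Dsim s q (weight ξ) (typeDist ξ) M - Dtest s q n μ M|
      ≤ (∑ J : Fin q → Fin n, |(∏ i, P J (M i)) - ∏ i, jointAt μ J (M i)|) / N := by
    intro M
    simp only [hPdef, hNdef]
    rw [Dsim_eq hn0 M, Dtest_eq M]
    rw [div_sub_div_same, abs_div, abs_of_pos (by positivity : (0:ℝ) < (n:ℝ)^q)]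
    gcongr
    rw [← Finset.sum_sub_distrib]
    exact Finset.abs_sum_le_sum_abs _ _
  have harith : 3 * (s:ℝ) * ε' ≤ ε := by
    rw [hε'def]
    have hfrac : 3 * (s:ℝ) / (3 * ((s:ℝ) + 1)) ≤ 1 := by
      rw [div_le_one hs1]; linarith
    calc 3 * (s:ℝ) * (ε / (3 * ((s:ℝ) + 1)))
        = ε * (3 * (s:ℝ) / (3 * ((s:ℝ) + 1))) := by ring
      _ ≤ ε * 1 := mul_le_mul_of_nonneg_left hfrac hε0.le
      _ = ε := mul_one ε
  calc dTV (Dsim s q (weight ξ) (typeDist ξ)) (Dtest s q n μ)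
      = (1/2) * ∑ M : Fin s → Fin q → Bool,
          |Dsim s q (weight ξ) (typeDist ξ) M - Dtest s q n μ M| := by
        rw [dTV, finsum_eq_sum_of_fintype]
    _ ≤ (1/2) * ∑ M : Fin s → Fin q → Bool,
          (∑ J : Fin q → Fin n, |(∏ i, P J (M i)) - ∏ i, jointAt μ J (M i)|) / N := by
        gcongr with M hM
        exact h1 M
    _ = (1/2) * ((∑ J : Fin q → Fin n, ∑ M : Fin s → Fin q → Bool,
          |(∏ i, P J (M i)) - ∏ i, jointAt μ J (M i)|) / N) := by
        rw [← Finset.sum_div, Finset.sum_comm]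
    _ ≤ (1/2) * ((∑ J : Fin q → Fin n, (s : ℝ) * ∑ y, |P J y - jointAt μ J y|) / N) := by
        gcongr with J hJ
        exact hybrid (hPnn J) (jointAt_nonneg hμnn J) (hPsum J) (hQsum J) s
    _ ≤ (1/2) * ((∑ J : Fin q → Fin n, (s : ℝ) * ∑ a, weight ξ a * D a J) / N) := by
        gcongr with J hJ
        exact hrow J
    _ = (1/2) * (((s:ℝ) * ∑ a, weight ξ a * ∑ J, D a J) / N) := by
        congr 2
        rw [← Finset.mul_sum]
        congr 1
        rw [Finset.sum_comm]
        apply Finset.sum_congr rfl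
        intro a _
        rw [Finset.mul_sum]
    _ ≤ (1/2) * (((s:ℝ) * (6 * ε' * N)) / N) := by
        gcongr
    _ = 3 * (s:ℝ) * ε' := by field_simp; ring
    _ ≤ ε := harith
end
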